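/- arXiv:1304.4305 — 7 statements merged into one kernel-verified Lean document; each statement's English description precedes it below -/
import Mathlib

section
/- Let k ≥ 0 be an integer and let g_{-k}, …, g_{-1}, g_0, g_1, …, g_k be the zeros of the Legendre polynomial L_{2k+1}; they are 2k+1 distinct points of the open interval (−1,1) and can be indexed so that g_{-i} = −g_i for all i (hence g_0 = 0). Set g_{-k-1} := −1 and g_{k+1} := 1, and for i = −k, …, k define γ_i := ∏_{j=−(k+1), j≠i}^{k} (1−g_j)/(g_i−g_j) + ∏_{j=−k, j≠i}^{k+1} (−1−g_j)/(g_i−g_j). Then every real polynomial v in two variables whose restrictions to the four edges of K̂ = [−1,1]² — i.e. the univariate polynomials v(1,·), v(−1,·), v(·,1), v(·,−1) — have degree ≤ 2k+1 satisfies Σ_{i=−k}^{k} γ_i (v(1,g_i) + v(−1,g_i)) = Σ_{i=−k}^{k} γ_i (v(g_i,1) + v(g_i,−1)). -/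
/-- The Legendre polynomial of degree `n`, via Rodrigues' formula. -/
noncomputable def legendreP (n : ℕ) : Polynomial ℝ :=
  (((2 : ℝ) ^ n * (Nat.factorial n))⁻¹) •
    Polynomial.derivative^[n] ((Polynomial.X ^ 2 - 1) ^ n)

/-!
For an edge polynomial `p` of degree `≤ 2k+1`, Lagrange interpolation at the `2k+2` nodes
`-1, g_{-k}, …, g_k`, evaluated at `1`, gives `p(1) = c p(-1) + ∑ᵢ ℓᵢ(1) p(gᵢ)` with
`c = ∏ᵢ (1 - gᵢ)/(-1 - gᵢ)`, and `c = -1` because the nodes `gᵢ` are symmetric about `0` and odd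
in number. Adding the same identity for the nodes `1, g_{-k}, …, g_k` evaluated at `-1` gives
`∑ᵢ γᵢ p(gᵢ) = 2 (p(1) + p(-1))`. Applied to the four edge restrictions of `v`, both sides become
twice the sum of the values of `v` at the corners of the square.
-/

open Polynomial Finset

namespace Lagrange

variable {F ι : Type*} [Field F] [DecidableEq ι] {s : Finset ι} {v : ι → F}

theorem eval_basis (i : ι) (x : F) :
    (Lagrange.basis s v i).eval x = ∏ j ∈ s.erase i, (x - v j) / (v i - v j) := by
  simp only [Lagrange.basis, eval_prod, basisDivisor, eval_mul, eval_C, eval_sub, eval_X,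
    div_eq_inv_mul]

theorem eval_eq_sum_eval_mul_prod {p : F[X]} (hvs : Set.InjOn v s) (hp : p.degree < #s)
    (x : F) : p.eval x = ∑ i ∈ s, (∏ j ∈ s.erase i, (x - v j) / (v i - v j)) * p.eval (v i) := by
  conv_lhs => rw [eq_interpolate hvs hp]
  simp only [interpolate_apply, eval_finsetSum, eval_mul, eval_C, eval_basis, mul_comm (p.eval _)]

theorem eval_eq_eval_mul_prod_add_sum_of_insert {p : F[X]} {a : ι} (ha : a ∉ s)
    (hvs : Set.InjOn v ↑(insert a s)) (hp : p.natDegree ≤ #s) (x : F) :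
    p.eval x = (∏ j ∈ s, (x - v j) / (v a - v j)) * p.eval (v a) +
      ∑ i ∈ s, (∏ j ∈ (insert a s).erase i, (x - v j) / (v i - v j)) * p.eval (v i) := by
  have hdeg : p.degree < #(insert a s) := by
    rw [card_insert_of_notMem ha]
    exact (degree_le_natDegree.trans (WithBot.coe_le_coe.mpr hp)).trans_lt
      (WithBot.coe_lt_coe.mpr (Nat.lt_succ_self _))
  rw [eval_eq_sum_eval_mul_prod hvs hdeg x, sum_insert ha, erase_insert ha]

end Lagrange

theorem prod_sub_eq_neg_prod_neg_sub {R : Type*} [CommRing R] (k : ℕ) {g : ℤ → R}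
    (hsym : ∀ i ∈ Icc (-(k : ℤ)) k, g (-i) = -g i) (x : R) :
    ∏ j ∈ Icc (-(k : ℤ)) k, (x - g j) = -∏ j ∈ Icc (-(k : ℤ)) k, (-x - g j) := by
  have hreflect : ∏ j ∈ Icc (-(k : ℤ)) k, (x - g j) = ∏ j ∈ Icc (-(k : ℤ)) k, (x + g j) := by
    refine prod_nbij' (fun i => -i) (fun i => -i) (fun i hi => ?_) (fun i hi => ?_)
      (fun i _ => neg_neg i) (fun i _ => neg_neg i) (fun i hi => ?_)
    · simp only [mem_Icc] at hi ⊢; omega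
    · simp only [mem_Icc] at hi ⊢; omega
    · rw [hsym i hi, ← sub_eq_add_neg]
  have hcard : #(Icc (-(k : ℤ)) k) = 2 * k + 1 := by rw [Int.card_Icc]; omega
  have hodd : (-1 : R) ^ (2 * k + 1) = -1 := Odd.neg_one_pow ⟨k, rfl⟩
  rw [hreflect, show (fun j => -x - g j) = fun j => -(x + g j) by funext j; ring, prod_neg,
    hcard, hodd]
  ring

theorem sum_lagrange_weights_at_endpoints_mul_eval {F ι : Type*} [Field F] [DecidableEq ι]
    {s : Finset ι} {g : ι → F} {a b : ι} (ha : a ∉ s) (hb : b ∉ s) (hga : g a = -1) (hgb : g b = 1)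
    (hinja : Set.InjOn g ↑(insert a s)) (hinjb : Set.InjOn g ↑(insert b s))
    (hprod : ∏ j ∈ s, (1 - g j) = -∏ j ∈ s, (-1 - g j)) {p : F[X]} (hp : p.natDegree ≤ #s) :
    ∑ i ∈ s, (∏ j ∈ (insert a s).erase i, (1 - g j) / (g i - g j) +
        ∏ j ∈ (insert b s).erase i, (-1 - g j) / (g i - g j)) * p.eval (g i) =
      2 * (p.eval 1 + p.eval (-1)) := by
  have hprod_ne {c : ι} (hc : c ∉ s) (hinj : Set.InjOn g ↑(insert c s)) :
      ∏ j ∈ s, (g c - g j) ≠ 0 :=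
    prod_ne_zero_iff.mpr fun j hj => sub_ne_zero.mpr fun h =>
      hc (hinj (mem_insert_self c s) (mem_insert_of_mem hj) h ▸ hj)
  have hright := Lagrange.eval_eq_eval_mul_prod_add_sum_of_insert ha hinja hp 1
  have hleft := Lagrange.eval_eq_eval_mul_prod_add_sum_of_insert hb hinjb hp (-1)
  have hcorner_a : ∏ j ∈ s, (1 - g j) / (-1 - g j) = -1 := by
    have := hprod_ne ha hinja
    rw [hga] at this
    rw [prod_div_distrib, hprod, neg_div, div_self this]
  have hcorner_b : ∏ j ∈ s, (-1 - g j) / (1 - g j) = -1 := by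
    have := hprod_ne hb hinjb
    rw [hgb] at this
    rw [prod_div_distrib, neg_eq_iff_eq_neg.mp hprod.symm, neg_div, div_self this]
  rw [hga, hcorner_a] at hright
  rw [hgb, hcorner_b] at hleft
  simp only [add_mul, sum_add_distrib]
  linear_combination -hright - hleft

theorem MvPolynomial.eval_aeval_pair {R : Type*} [CommRing R] (v : MvPolynomial (Fin 2) R)
    (p q : R[X]) (t : R) :
    (MvPolynomial.aeval ![p, q] v).eval t = MvPolynomial.eval ![p.eval t, q.eval t] v := by
  rw [← Polynomial.coe_aeval_eq_eval, comp_aeval_apply, ← aeval_eq_eval]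
  congr 2
  funext i
  fin_cases i <;> simp

theorem sum_mul_eval_eq_two_mul_eval_add_eval (k : ℕ) {g γ : ℤ → ℝ}
    (hmem : ∀ i ∈ Icc (-(k : ℤ)) k, g i ∈ Set.Ioo (-1 : ℝ) 1)
    (hinj : Set.InjOn g (Icc (-(k : ℤ)) k)) (hsym : ∀ i ∈ Icc (-(k : ℤ)) k, g (-i) = -g i)
    (hL : g (-(k : ℤ) - 1) = -1) (hR : g ((k : ℤ) + 1) = 1)
    (hγ : ∀ i ∈ Icc (-(k : ℤ)) k, γ i =
      (∏ j ∈ (Icc (-(k : ℤ) - 1) k).erase i, (1 - g j) / (g i - g j)) +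
      (∏ j ∈ (Icc (-(k : ℤ)) (k + 1)).erase i, (-1 - g j) / (g i - g j)))
    (p : ℝ[X]) (hp : p.natDegree ≤ 2 * k + 1) :
    ∑ i ∈ Icc (-(k : ℤ)) k, γ i * p.eval (g i) = 2 * (p.eval 1 + p.eval (-1)) := by
  set I := Icc (-(k : ℤ)) k
  have hlo : -(k : ℤ) - 1 ∉ I := by simp [I]
  have hhi : (k : ℤ) + 1 ∉ I := by simp [I]
  have hIcc_lo : Icc (-(k : ℤ) - 1) k = insert (-(k : ℤ) - 1) I := by ext; simp [I]; omega
  have hIcc_hi : Icc (-(k : ℤ)) (k + 1) = insert ((k : ℤ) + 1) I := by ext; simp [I]; omega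
  have hinj_lo : Set.InjOn g ↑(insert (-(k : ℤ) - 1) I) := by
    rw [coe_insert, Set.injOn_insert (mem_coe.not.mpr hlo)]
    exact ⟨hinj, fun ⟨j, hj, h⟩ => (hmem j hj).1.ne' (h.trans hL)⟩
  have hinj_hi : Set.InjOn g ↑(insert ((k : ℤ) + 1) I) := by
    rw [coe_insert, Set.injOn_insert (mem_coe.not.mpr hhi)]
    exact ⟨hinj, fun ⟨j, hj, h⟩ => (hmem j hj).2.ne (h.trans hR)⟩
  have hcard : #I = 2 * k + 1 := by rw [Int.card_Icc]; omega
  rw [← sum_lagrange_weights_at_endpoints_mul_eval hlo hhi hL hR hinj_lo hinj_hi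
    (prod_sub_eq_neg_prod_neg_sub k hsym 1) (hcard ▸ hp)]
  exact sum_congr rfl fun i hi => by rw [hγ i hi, hIcc_lo, hIcc_hi]

theorem stmt_0_general (k : ℕ) (g : ℤ → ℝ)
    (hmem : ∀ i ∈ Finset.Icc (-(k : ℤ)) (k : ℤ), g i ∈ Set.Ioo (-1 : ℝ) 1)
    (hinj : Set.InjOn g (Finset.Icc (-(k : ℤ)) (k : ℤ)))
    (hsym : ∀ i ∈ Finset.Icc (-(k : ℤ)) (k : ℤ), g (-i) = -g i)
    (hL : g (-(k : ℤ) - 1) = -1) (hR : g ((k : ℤ) + 1) = 1)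
    (γ : ℤ → ℝ)
    (hγ : ∀ i ∈ Finset.Icc (-(k : ℤ)) (k : ℤ), γ i =
      (∏ j ∈ (Finset.Icc (-(k : ℤ) - 1) (k : ℤ)).erase i, (1 - g j) / (g i - g j)) +
      (∏ j ∈ (Finset.Icc (-(k : ℤ)) ((k : ℤ) + 1)).erase i, (-1 - g j) / (g i - g j)))
    (v : MvPolynomial (Fin 2) ℝ)
    (h1 : (MvPolynomial.aeval ![(1 : Polynomial ℝ), Polynomial.X] v).natDegree ≤ 2 * k + 1)
    (h2 : (MvPolynomial.aeval ![(-1 : Polynomial ℝ), Polynomial.X] v).natDegree ≤ 2 * k + 1)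
    (h3 : (MvPolynomial.aeval ![(Polynomial.X : Polynomial ℝ), 1] v).natDegree ≤ 2 * k + 1)
    (h4 : (MvPolynomial.aeval ![(Polynomial.X : Polynomial ℝ), -1] v).natDegree ≤ 2 * k + 1) :
    ∑ i ∈ Finset.Icc (-(k : ℤ)) (k : ℤ),
        γ i * (MvPolynomial.eval ![1, g i] v + MvPolynomial.eval ![-1, g i] v) =
      ∑ i ∈ Finset.Icc (-(k : ℤ)) (k : ℤ),
        γ i * (MvPolynomial.eval ![g i, 1] v + MvPolynomial.eval ![g i, -1] v) := by
  have hquad := sum_mul_eval_eq_two_mul_eval_add_eval k hmem hinj hsym hL hR hγ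
  have e1 (t : ℝ) : (MvPolynomial.aeval ![1, X] v).eval t = MvPolynomial.eval ![1, t] v := by
    simpa using MvPolynomial.eval_aeval_pair v 1 X t
  have e2 (t : ℝ) : (MvPolynomial.aeval ![-1, X] v).eval t = MvPolynomial.eval ![-1, t] v := by
    simpa using MvPolynomial.eval_aeval_pair v (-1) X t
  have e3 (t : ℝ) : (MvPolynomial.aeval ![X, 1] v).eval t = MvPolynomial.eval ![t, 1] v := by
    simpa using MvPolynomial.eval_aeval_pair v X 1 t
  have e4 (t : ℝ) : (MvPolynomial.aeval ![X, -1] v).eval t = MvPolynomial.eval ![t, -1] v := by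
    simpa using MvPolynomial.eval_aeval_pair v X (-1) t
  simp only [mul_add, sum_add_distrib, ← e1, ← e2, ← e3, ← e4, hquad _ h1, hquad _ h2,
    hquad _ h3, hquad _ h4]
  simp only [e1, e2, e3, e4]
  ring

theorem stmt_0 (k : ℕ) (g : ℤ → ℝ)
    (hzero : ∀ i ∈ Finset.Icc (-(k : ℤ)) (k : ℤ),
      (legendreP (2 * k + 1)).eval (g i) = 0)
    (hmem : ∀ i ∈ Finset.Icc (-(k : ℤ)) (k : ℤ), g i ∈ Set.Ioo (-1 : ℝ) 1)
    (hinj : Set.InjOn g (Finset.Icc (-(k : ℤ)) (k : ℤ)))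
    (hsym : ∀ i ∈ Finset.Icc (-(k : ℤ)) (k : ℤ), g (-i) = -g i)
    (hL : g (-(k : ℤ) - 1) = -1) (hR : g ((k : ℤ) + 1) = 1)
    (γ : ℤ → ℝ)
    (hγ : ∀ i ∈ Finset.Icc (-(k : ℤ)) (k : ℤ), γ i =
      (∏ j ∈ (Finset.Icc (-(k : ℤ) - 1) (k : ℤ)).erase i, (1 - g j) / (g i - g j)) +
      (∏ j ∈ (Finset.Icc (-(k : ℤ)) ((k : ℤ) + 1)).erase i, (-1 - g j) / (g i - g j)))
    (v : MvPolynomial (Fin 2) ℝ)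
    (h1 : (MvPolynomial.aeval ![(1 : Polynomial ℝ), Polynomial.X] v).natDegree ≤ 2 * k + 1)
    (h2 : (MvPolynomial.aeval ![(-1 : Polynomial ℝ), Polynomial.X] v).natDegree ≤ 2 * k + 1)
    (h3 : (MvPolynomial.aeval ![(Polynomial.X : Polynomial ℝ), 1] v).natDegree ≤ 2 * k + 1)
    (h4 : (MvPolynomial.aeval ![(Polynomial.X : Polynomial ℝ), -1] v).natDegree ≤ 2 * k + 1) :
    ∑ i ∈ Finset.Icc (-(k : ℤ)) (k : ℤ),
        γ i * (MvPolynomial.eval ![1, g i] v + MvPolynomial.eval ![-1, g i] v) =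
      ∑ i ∈ Finset.Icc (-(k : ℤ)) (k : ℤ),
        γ i * (MvPolynomial.eval ![g i, 1] v + MvPolynomial.eval ![g i, -1] v) :=
  stmt_0_general k g hmem hinj hsym hL hR γ hγ v h1 h2 h3 h4
end

section
/- Let k ≥ 0 be an integer and let g_{-k}, …, g_k be 2k+1 distinct points of the open interval (−1,1) with g_{-i} = −g_i for all i (hence g_0 = 0). Set g_{-k-1} := −1 and g_{k+1} := 1, and define γ_i := ∏_{j=−(k+1), j≠i}^{k} (1−g_j)/(g_i−g_j) + ∏_{j=−k, j≠i}^{k+1} (−1−g_j)/(g_i−g_j) for i = −k, …, k. Then for every i with 1 ≤ |i| ≤ k one has γ_i = (2/g_i²) ∏_{j=1, j≠|i|}^{k} (1−g_j²)/(g_i²−g_j²), and γ_0 = 4 ∏_{j=1}^{k} (g_j²−1)/g_j². In particular γ_i ≠ 0 for every i. -/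
/-!
`γ i` is the sum of the `i`-th Lagrange basis polynomial of the nodes `g (-k - 1), …, g k`
evaluated at `1` and that of the nodes `g (-k), …, g (k + 1)` evaluated at `-1`. Both node sets are
symmetric about `0` except for the endpoint `∓1`. Pairing `g j` with `g (-j) = -g j` turns the
factors `(c - g j) / (x - g j)` and `(c + g j) / (x + g j)` into `(c² - g j²) / (x² - g j²)`, which
is the same for `c = 1` and `c = -1`. The remaining factors, of the endpoint, of `g 0 = 0` and of
`-g i`, contribute `1 / g i²` to each product (both products contribute `2` when `i = 0`).
Nonvanishing follows because the nodes lie in `(-1, 1)` and are distinct up to sign.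
-/

open Finset Pointwise

theorem prod_union_neg {M : Type*} [CommMonoid M] {S : Finset ℤ} (hS : ∀ j ∈ S, 0 < j)
    (f : ℤ → M) : ∏ j ∈ S ∪ -S, f j = ∏ j ∈ S, f j * f (-j) := by
  have hdisj : Disjoint S (-S) := disjoint_left.mpr fun j hj hj' => by
    have := hS _ (mem_neg'.mp hj'); have := hS j hj; omega
  rw [prod_union hdisj, ← image_neg_eq_neg, prod_image neg_injective.injOn, prod_mul_distrib]

theorem Icc_erase_zero (k : ℤ) : (Icc (-k) k).erase 0 = Icc 1 k ∪ -Icc 1 k := by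
  ext j; simp only [mem_erase, mem_union, mem_neg', mem_Icc]; omega

theorem Icc_erase_of_ne_zero {k i : ℤ} (hi : i ∈ Icc (-k) k) (hi0 : i ≠ 0) :
    (Icc (-k) k).erase i =
      insert 0 (insert (-i) ((Icc 1 k).erase |i| ∪ -(Icc 1 k).erase |i|)) := by
  rw [mem_Icc] at hi
  ext j; simp only [mem_erase, mem_insert, mem_union, mem_neg', mem_Icc]
  rcases abs_cases i with ⟨h, _⟩ | ⟨h, _⟩ <;> rw [h] <;> omega

theorem Icc_sub_one_erase {k i : ℤ} (hi : i ∈ Icc (-k) k) :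
    (Icc (-k - 1) k).erase i = insert (-k - 1) ((Icc (-k) k).erase i) := by
  rw [mem_Icc] at hi
  ext j; simp only [mem_erase, mem_insert, mem_Icc]; omega

theorem Icc_add_one_erase {k i : ℤ} (hi : i ∈ Icc (-k) k) :
    (Icc (-k) (k + 1)).erase i = insert (k + 1) ((Icc (-k) k).erase i) := by
  rw [mem_Icc] at hi
  ext j; simp only [mem_erase, mem_insert, mem_Icc]; omega

theorem mem_Icc_neg_of_mem_Icc_one {k j : ℤ} (hj : j ∈ Icc 1 k) : j ∈ Icc (-k) k := by
  rw [mem_Icc] at hj ⊢; omega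

theorem sub_div_sub_mul_add_div_add {K : Type*} [Field K] (c a x : K) :
    (c - a) / (x - a) * ((c + a) / (x + a)) = (c ^ 2 - a ^ 2) / (x ^ 2 - a ^ 2) := by
  rw [div_mul_div_comm]; congr 1 <;> ring

section

variable {K : Type*} [Field K] {k : ℤ} {g : ℤ → K}

theorem prod_union_neg_sub_div_sub {S : Finset ℤ} (hS : ∀ j ∈ S, 0 < j)
    (hsym : ∀ j ∈ S, g (-j) = -g j) (c x : K) :
    ∏ j ∈ S ∪ -S, (c - g j) / (x - g j) = ∏ j ∈ S, (c ^ 2 - g j ^ 2) / (x ^ 2 - g j ^ 2) := by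
  rw [prod_union_neg hS]
  refine prod_congr rfl fun j hj => ?_
  rw [hsym j hj, sub_neg_eq_add, sub_neg_eq_add, sub_div_sub_mul_add_div_add]

theorem lagrange_sum_eq_of_ne_zero [NeZero (2 : K)] (hsym : ∀ j ∈ Icc (-k) k, g (-j) = -g j)
    (hL : g (-k - 1) = -1) (hR : g (k + 1) = 1) (hg0 : g 0 = 0) {i : ℤ} (hi : i ∈ Icc (-k) k)
    (hi0 : i ≠ 0) (hx0 : g i ≠ 0) (hx1 : g i ≠ 1) (hxm1 : g i ≠ -1) :
    (∏ j ∈ (Icc (-k - 1) k).erase i, (1 - g j) / (g i - g j)) +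
        (∏ j ∈ (Icc (-k) (k + 1)).erase i, (-1 - g j) / (g i - g j)) =
      2 / g i ^ 2 * ∏ j ∈ (Icc 1 k).erase |i|, (1 - g j ^ 2) / (g i ^ 2 - g j ^ 2) := by
  set S := (Icc 1 k).erase |i|
  have hSpos : ∀ j ∈ S, 0 < j := fun j hj => (mem_Icc.mp (mem_of_mem_erase hj)).1
  have hSsym : ∀ j ∈ S, g (-j) = -g j := fun j hj =>
    hsym j (mem_Icc_neg_of_mem_Icc_one (mem_of_mem_erase hj))
  have h0 : 0 ∉ insert (-i) (S ∪ -S) := by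
    simp only [S, mem_insert, mem_union, mem_neg', mem_erase, mem_Icc]; omega
  have hneg : -i ∉ S ∪ -S := by
    simp only [S, mem_union, mem_neg', mem_erase, mem_Icc]
    rcases abs_cases i with ⟨h, _⟩ | ⟨h, _⟩ <;> rw [h] <;> omega
  rw [Icc_sub_one_erase hi, Icc_add_one_erase hi, prod_insert (by simp),
    prod_insert (by simp), Icc_erase_of_ne_zero hi hi0, prod_insert h0, prod_insert h0,
    prod_insert hneg, prod_insert hneg, prod_union_neg_sub_div_sub hSpos hSsym,
    prod_union_neg_sub_div_sub hSpos hSsym, hL, hR, hg0, hsym i hi, one_pow, neg_one_sq]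
  generalize ∏ j ∈ S, (1 - g j ^ 2) / (g i ^ 2 - g j ^ 2) = P
  have hsub : g i - 1 ≠ 0 := sub_ne_zero.mpr hx1
  have hadd : g i + 1 ≠ 0 := by rwa [← sub_neg_eq_add, sub_ne_zero]
  simp only [sub_neg_eq_add, sub_zero, ← two_mul]
  field_simp
  ring

theorem lagrange_sum_eq_of_eq_zero (hk : 0 ≤ k) (hsym : ∀ j ∈ Icc (-k) k, g (-j) = -g j)
    (hL : g (-k - 1) = -1) (hR : g (k + 1) = 1) (hg0 : g 0 = 0) :
    (∏ j ∈ (Icc (-k - 1) k).erase 0, (1 - g j) / (g 0 - g j)) +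
        (∏ j ∈ (Icc (-k) (k + 1)).erase 0, (-1 - g j) / (g 0 - g j)) =
      4 * ∏ j ∈ Icc 1 k, (g j ^ 2 - 1) / g j ^ 2 := by
  have hpos : ∀ j ∈ Icc 1 k, 0 < j := fun j hj => (mem_Icc.mp hj).1
  have hsym' : ∀ j ∈ Icc 1 k, g (-j) = -g j := fun j hj =>
    hsym j (mem_Icc_neg_of_mem_Icc_one hj)
  have h0 : (0 : ℤ) ∈ Icc (-k) k := by rw [mem_Icc]; omega
  rw [Icc_sub_one_erase h0, Icc_add_one_erase h0, prod_insert (by simp),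
    prod_insert (by simp), Icc_erase_zero, prod_union_neg_sub_div_sub hpos hsym',
    prod_union_neg_sub_div_sub hpos hsym', hL, hR, hg0, one_pow, neg_one_sq]
  simp only [zero_pow two_ne_zero, zero_sub, ← neg_sub (g _ ^ 2), sub_zero, neg_div_neg_eq]
  ring

theorem sq_ne_sq_of_injOn (hinj : Set.InjOn g (Icc (-k) k))
    (hsym : ∀ j ∈ Icc (-k) k, g (-j) = -g j) {i j : ℤ} (hi : i ∈ Icc (-k) k)
    (hj : j ∈ Icc (-k) k) (hji : j ≠ i) (hjni : j ≠ -i) : g i ^ 2 ≠ g j ^ 2 := by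
  have hnj : -j ∈ Icc (-k) k := by rw [mem_Icc] at hj ⊢; omega
  rw [Ne, sq_eq_sq_iff_eq_or_eq_neg, ← hsym j hj, not_or]
  exact ⟨fun h => hji (hinj hj hi h.symm), fun h => hjni (by have := hinj hnj hi h.symm; omega)⟩

theorem prod_one_sub_sq_div_ne_zero (hinj : Set.InjOn g (Icc (-k) k))
    (hsym : ∀ j ∈ Icc (-k) k, g (-j) = -g j) (hsq1 : ∀ j ∈ Icc (-k) k, g j ^ 2 ≠ 1) {i : ℤ}
    (hi : i ∈ Icc (-k) k) :
    ∏ j ∈ (Icc 1 k).erase |i|, (1 - g j ^ 2) / (g i ^ 2 - g j ^ 2) ≠ 0 := by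
  refine prod_ne_zero_iff.mpr fun j hj => ?_
  obtain ⟨hji, hjS⟩ := mem_erase.mp hj
  have hjk := mem_Icc_neg_of_mem_Icc_one hjS
  have hj1 := mem_Icc.mp hjS
  refine div_ne_zero ?_ ?_
  · exact sub_ne_zero.mpr (hsq1 j hjk).symm
  · refine sub_ne_zero.mpr (sq_ne_sq_of_injOn hinj hsym hi hjk ?_ ?_) <;>
      rcases abs_cases i with ⟨h, _⟩ | ⟨h, _⟩ <;> rw [h] at hji <;> omega

end

theorem stmt_1 (k : ℕ) (g : ℤ → ℝ)
    (hmem : ∀ i ∈ Finset.Icc (-(k : ℤ)) (k : ℤ), g i ∈ Set.Ioo (-1 : ℝ) 1)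
    (hinj : Set.InjOn g (Finset.Icc (-(k : ℤ)) (k : ℤ)))
    (hsym : ∀ i ∈ Finset.Icc (-(k : ℤ)) (k : ℤ), g (-i) = -g i)
    (hL : g (-(k : ℤ) - 1) = -1) (hR : g ((k : ℤ) + 1) = 1)
    (γ : ℤ → ℝ)
    (hγ : ∀ i ∈ Finset.Icc (-(k : ℤ)) (k : ℤ), γ i =
      (∏ j ∈ (Finset.Icc (-(k : ℤ) - 1) (k : ℤ)).erase i, (1 - g j) / (g i - g j)) +
      (∏ j ∈ (Finset.Icc (-(k : ℤ)) ((k : ℤ) + 1)).erase i, (-1 - g j) / (g i - g j))) :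
    (∀ i ∈ Finset.Icc (-(k : ℤ)) (k : ℤ), i ≠ 0 →
        γ i = 2 / (g i) ^ 2 *
          ∏ j ∈ (Finset.Icc (1 : ℤ) (k : ℤ)).erase |i|,
            (1 - (g j) ^ 2) / ((g i) ^ 2 - (g j) ^ 2)) ∧
      γ 0 = 4 * ∏ j ∈ Finset.Icc (1 : ℤ) (k : ℤ), ((g j) ^ 2 - 1) / (g j) ^ 2 ∧
      ∀ i ∈ Finset.Icc (-(k : ℤ)) (k : ℤ), γ i ≠ 0 := by
  have h0 : (0 : ℤ) ∈ Icc (-(k : ℤ)) k := by simp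
  have hg0 : g 0 = 0 := by have := hsym 0 h0; rw [neg_zero] at this; linarith
  have hsq1 : ∀ j ∈ Icc (-(k : ℤ)) k, g j ^ 2 ≠ 1 := fun j hj =>
    ((sq_lt_one_iff_abs_lt_one _).mpr (abs_lt.mpr (hmem j hj))).ne
  have hne0 : ∀ i ∈ Icc (-(k : ℤ)) k, i ≠ 0 → g i ≠ 0 := fun i hi hi0 => by
    simpa [hg0] using sq_ne_sq_of_injOn hinj hsym hi h0 (Ne.symm hi0) (by omega)
  have hformula : ∀ i ∈ Icc (-(k : ℤ)) k, i ≠ 0 → γ i = 2 / g i ^ 2 *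
      ∏ j ∈ (Icc 1 (k : ℤ)).erase |i|, (1 - g j ^ 2) / (g i ^ 2 - g j ^ 2) := fun i hi hi0 => by
    rw [hγ i hi]
    exact lagrange_sum_eq_of_ne_zero hsym hL hR hg0 hi hi0 (hne0 i hi hi0) (hmem i hi).2.ne
      (hmem i hi).1.ne'
  have hformula0 : γ 0 = 4 * ∏ j ∈ Icc 1 (k : ℤ), (g j ^ 2 - 1) / g j ^ 2 := by
    rw [hγ 0 h0]
    exact lagrange_sum_eq_of_eq_zero (by omega) hsym hL hR hg0
  refine ⟨hformula, hformula0, fun i hi => ?_⟩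
  have hP := prod_one_sub_sq_div_ne_zero hinj hsym hsq1 hi
  rcases eq_or_ne i 0 with rfl | hi0
  · rw [hformula0]
    refine mul_ne_zero four_ne_zero ?_
    simpa only [abs_zero, erase_eq_of_notMem (by simp : (0 : ℤ) ∉ Icc 1 (k : ℤ)), hg0,
      zero_pow two_ne_zero, ← neg_sub (g _ ^ 2), sub_zero, neg_div_neg_eq] using hP
  · rw [hformula i hi hi0]
    exact mul_ne_zero (div_ne_zero two_ne_zero (pow_ne_zero 2 (hne0 i hi hi0))) hP
end

section
/- Let k ≥ 0, m = 2k+1, and let g_{-k}, …, g_k be the zeros of the Legendre polynomial L_{2k+1}, which are 2k+1 distinct points of (−1,1) indexed so that g_{-i} = −g_i (hence g_0 = 0). Let G := {(1,g_i), (−1,g_i), (g_i,1), (g_i,−1) : i = −k, …, k} and let I be a finite subset of the open square (−1,1)² such that the only polynomial of total degree ≤ 2k−3 vanishing at every point of I is the zero polynomial. If v ∈ R_m(K̂) vanishes at every point of G ∪ I, then v is the zero polynomial. -/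
section Nodal

open Finset Lagrange Polynomial

variable {R : Type*} [CommRing R] {ι : Type*}

theorem Lagrange.eq_C_mul_nodal_of_eval_eq_zero [IsDomain R] {s : Finset ι} {v : ι → R}
    (hvs : Set.InjOn v s) {f : R[X]} (hf : f.natDegree ≤ #s)
    (hroots : ∀ i ∈ s, f.eval (v i) = 0) :
    f = C (f.coeff #s) * nodal s v := by
  refine eq_of_degree_sub_lt_of_eval_index_eq s hvs ?_ fun i hi => by
    rw [hroots i hi, eval_mul, eval_nodal_at_node hi, mul_zero]
  rw [degree_lt_iff_coeff_zero]
  intro n hn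
  rw [coeff_sub, coeff_C_mul]
  rcases hn.eq_or_lt with rfl | hlt
  · rw [← natDegree_nodal (v := v), nodal_monic.coeff_natDegree, mul_one, natDegree_nodal, sub_self]
  · rw [coeff_eq_zero_of_natDegree_lt (hf.trans_lt hlt),
      coeff_eq_zero_of_natDegree_lt (show (nodal s v).natDegree < n by rwa [natDegree_nodal]),
      mul_zero, sub_zero]

theorem Lagrange.eval_neg_nodal [InvolutiveNeg ι] {s : Finset ι} {v : ι → R}
    (hs : ∀ i ∈ s, -i ∈ s) (hv : ∀ i ∈ s, v (-i) = -v i) (x : R) :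
    (nodal s v).eval (-x) = (-1) ^ #s * (nodal s v).eval x := by
  have hreindex : ∏ i ∈ s, (x + v i) = ∏ i ∈ s, (x - v i) :=
    prod_nbij' (fun i => -i) (fun i => -i) (fun i hi => hs i hi) (fun i hi => hs i hi)
      (fun i _ => neg_neg i) (fun i _ => neg_neg i) fun i hi => by
        rw [hv i hi, sub_neg_eq_add]
  rw [eval_nodal, eval_nodal, ← hreindex, ← prod_const, ← prod_mul_distrib]
  exact prod_congr rfl fun i _ => by ring

end Nodal

section Slice

open Finset Polynomial

variable {R : Type*} [CommRing R]

noncomputable def sliceAt (s : R) : MvPolynomial (Fin 2) R →ₐ[R] R[X] :=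
  MvPolynomial.aeval ![C s, X]

theorem eval_sliceAt (s t : R) (w : MvPolynomial (Fin 2) R) :
    (sliceAt s w).eval t = MvPolynomial.eval ![s, t] w := by
  induction w using MvPolynomial.induction_on with
  | C a => simp [sliceAt]
  | add f g hf hg => simp [hf, hg]
  | mul_X f j hf => fin_cases j <;> simp [sliceAt, ← hf]

theorem sliceAt_monomial (s : R) (d : Fin 2 →₀ ℕ) (c : R) :
    sliceAt s (MvPolynomial.monomial d c) = C (c * s ^ d 0) * X ^ d 1 := by
  simp [sliceAt, MvPolynomial.aeval_monomial, Finsupp.prod_fintype, Fin.prod_univ_two,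
    mul_assoc]

theorem sliceAt_eq_sum (s : R) (w : MvPolynomial (Fin 2) R) :
    sliceAt s w = ∑ d ∈ w.support, C (w.coeff d * s ^ d 0) * X ^ d 1 := by
  conv_lhs => rw [w.as_sum]
  simp only [map_sum, sliceAt_monomial]

theorem MvPolynomial.add_le_totalDegree_of_mem_support {w : MvPolynomial (Fin 2) R}
    {d : Fin 2 →₀ ℕ} (hd : d ∈ w.support) : d 0 + d 1 ≤ w.totalDegree := by
  simpa [Finsupp.sum_fintype] using le_totalDegree hd

theorem natDegree_sliceAt_le (s : R) (w : MvPolynomial (Fin 2) R) :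
    (sliceAt s w).natDegree ≤ w.totalDegree := by
  rw [sliceAt_eq_sum]
  refine natDegree_sum_le_of_forall_le _ _ fun d hd => (natDegree_C_mul_X_pow_le _ _).trans ?_
  have := MvPolynomial.add_le_totalDegree_of_mem_support hd
  omega

theorem coeff_sliceAt_of_totalDegree_le (s : R) {w : MvPolynomial (Fin 2) R} {n : ℕ}
    (hw : w.totalDegree ≤ n + 1) :
    (sliceAt s w).coeff n =
      w.coeff (Finsupp.single 1 n) + w.coeff (Finsupp.single 0 1 + Finsupp.single 1 n) * s := by
  set f : (Fin 2 →₀ ℕ) → R := fun d => if n = d 1 then w.coeff d * s ^ d 0 else 0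
  set T : Finset (Fin 2 →₀ ℕ) := {Finsupp.single 1 n, Finsupp.single 0 1 + Finsupp.single 1 n}
  have hne : Finsupp.single (1 : Fin 2) n ≠ Finsupp.single 0 1 + Finsupp.single 1 n := by
    intro h; simpa using congrArg (· 0) h
  have hoff : ∀ d ∈ w.support ∪ T, d ∉ T → f d = 0 := by
    intro d hd hdT
    refine if_neg fun hn => hdT ?_
    have hdeg := MvPolynomial.add_le_totalDegree_of_mem_support ((mem_union.mp hd).resolve_right hdT)
    obtain h0 | h0 : d 0 = 0 ∨ d 0 = 1 := by omega
    · exact mem_insert.mpr (Or.inl (by ext i; fin_cases i <;> simp [h0, hn]))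
    · exact mem_insert_of_mem (mem_singleton.mpr (by ext i; fin_cases i <;> simp [h0, hn]))
  calc (sliceAt s w).coeff n = ∑ d ∈ w.support, f d := by
        simp only [sliceAt_eq_sum, finsetSum_coeff, coeff_C_mul_X_pow, f]
    _ = ∑ d ∈ w.support ∪ T, f d :=
        sum_subset subset_union_left fun d _ hd => by simp [f, MvPolynomial.notMem_support_iff.mp hd]
    _ = ∑ d ∈ T, f d := (sum_subset subset_union_right hoff).symm
    _ = _ := by simp [T, sum_pair hne, f]

end Slice

section MvPolynomialFactors

open MvPolynomial

section LinearFactor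

variable {R : Type*} [CommRing R] {σ : Type*} [DecidableEq σ]

theorem MvPolynomial.X_sub_C_dvd_sub_aeval_update (i : σ) (c : R) (f : MvPolynomial σ R) :
    X i - C c ∣ f - aeval (Function.update X i (C c)) f := by
  induction f using MvPolynomial.induction_on with
  | C a => simp
  | add f g hf hg => simpa [add_sub_add_comm] using dvd_add hf hg
  | mul_X f j hf =>
    have hj : X i - C c ∣ X j - Function.update (X : σ → MvPolynomial σ R) i (C c) j := by
      rcases eq_or_ne j i with rfl | hji
      · simp
      · simp [Function.update_of_ne hji]
    have : f * X j - aeval (Function.update X i (C c)) (f * X j) =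
        (f - aeval (Function.update X i (C c)) f) * X j +
          aeval (Function.update X i (C c)) f * (X j - Function.update X i (C c) j) := by
      simp only [map_mul, aeval_X]; ring
    rw [this]
    exact dvd_add (dvd_mul_of_dvd_left hf _) (dvd_mul_of_dvd_right hj _)

theorem MvPolynomial.X_sub_C_dvd_of_eval_eq_zero [IsDomain R] [Infinite R] {i : σ} {c : R}
    {f : MvPolynomial σ R} (hf : ∀ x : σ → R, x i = c → eval x f = 0) : X i - C c ∣ f := by
  have hsub : aeval (Function.update X i (C c)) f = 0 := MvPolynomial.funext fun x => by
    have hx : (fun j => aeval x (Function.update X i (C c) j)) = Function.update x i c := by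
      ext j; rcases eq_or_ne j i with rfl | hji <;> simp [Function.update_of_ne, *]
    rw [map_zero, ← coe_aeval_eq_eval]
    change ((aeval x).comp (aeval _)) f = 0
    rw [comp_aeval, hx]
    exact hf _ (Function.update_self ..)
  simpa only [hsub, sub_zero] using X_sub_C_dvd_sub_aeval_update i c f

noncomputable def MvPolynomial.translate (i : σ) (c : R) :
    MvPolynomial σ R ≃ₐ[R] MvPolynomial σ R :=
  AlgEquiv.ofAlgHom (aeval (Function.update X i (X i + C c)))
    (aeval (Function.update X i (X i - C c)))
    (by ext j; rcases eq_or_ne j i with rfl | hji <;> simp [Function.update_of_ne, *])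
    (by ext j; rcases eq_or_ne j i with rfl | hji <;> simp [Function.update_of_ne, *])

theorem MvPolynomial.prime_X_sub_C [IsDomain R] (i : σ) (c : R) :
    Prime (X i - C c : MvPolynomial σ R) := by
  have : translate i (-c) (X i) = X i - C c := by simp [translate, sub_eq_add_neg]
  rw [← this, MulEquiv.prime_iff]
  exact X_prime

end LinearFactor

theorem Prime.mul_dvd_of_dvd_of_not_dvd {α : Type*} [CommMonoidWithZero α] {p q w : α}
    (hq : Prime q) (hqp : ¬q ∣ p) (hp : p ∣ w) (hqw : q ∣ w) : p * q ∣ w := by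
  obtain ⟨r, rfl⟩ := hp
  exact mul_dvd_mul_left p ((hq.dvd_or_dvd hqw).resolve_left hqp)

theorem MvPolynomial.not_dvd_of_eval {R σ : Type*} [CommRing R] {p q : MvPolynomial σ R}
    (x : σ → R) (hq : eval x q = 0) (hp : eval x p ≠ 0) : ¬q ∣ p := by
  rintro ⟨r, rfl⟩
  simp [hq] at hp

theorem MvPolynomial.totalDegree_X_sub_C {R σ : Type*} [CommRing R] [Nontrivial R] (i : σ)
    (c : R) :
    (X i - C c : MvPolynomial σ R).totalDegree = 1 := by
  refine le_antisymm ((totalDegree_sub_C_le _ _).trans (totalDegree_X i).le) ?_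
  classical
  have hmem : Finsupp.single i 1 ∈ (X i - C c : MvPolynomial σ R).support := by
    simp [coeff_C, eq_comm (a := (0 : σ →₀ ℕ))]
  simpa using le_totalDegree hmem

section Square

variable {R : Type*} [CommRing R]

noncomputable def squareBubble : MvPolynomial (Fin 2) R :=
  (X 0 - C 1) * (X 0 - C (-1)) * (X 1 - C 1) * (X 1 - C (-1))

theorem eval_squareBubble (s t : R) :
    eval ![s, t] (squareBubble : MvPolynomial (Fin 2) R) =
      (s - 1) * (s + 1) * ((t - 1) * (t + 1)) := by
  simp [squareBubble]; ring

theorem squareBubble_dvd [IsDomain R] [CharZero R] {w : MvPolynomial (Fin 2) R}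
    (hw : ∀ s : R, s = 1 ∨ s = -1 → ∀ t, eval ![s, t] w = 0 ∧ eval ![t, s] w = 0) :
    squareBubble ∣ w := by
  have hline (i : Fin 2) (c : R) (hc : c = 1 ∨ c = -1) : X i - C c ∣ w := by
    refine X_sub_C_dvd_of_eval_eq_zero fun x hx => ?_
    have hx' : x = ![x 0, x 1] := by ext j; fin_cases j <;> rfl
    fin_cases i <;> simp only [Fin.zero_eta, Fin.mk_one] at hx <;> rw [hx', hx]
    exacts [(hw c hc _).1, (hw c hc _).2]
  refine (prime_X_sub_C 1 (-1)).mul_dvd_of_dvd_of_not_dvd (not_dvd_of_eval ![0, -1] ?_ ?_)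
    ((prime_X_sub_C 1 1).mul_dvd_of_dvd_of_not_dvd (not_dvd_of_eval ![0, 1] ?_ ?_)
      ((prime_X_sub_C 0 (-1)).mul_dvd_of_dvd_of_not_dvd (not_dvd_of_eval ![-1, 0] ?_ ?_)
        (hline 0 1 (by simp)) (hline 0 (-1) (by simp))) (hline 1 1 (by simp)))
    (hline 1 (-1) (by simp))
  all_goals norm_num

theorem totalDegree_squareBubble_mul [IsDomain R] {r : MvPolynomial (Fin 2) R} (hr : r ≠ 0) :
    (squareBubble * r).totalDegree = r.totalDegree + 4 := by
  have hne (i : Fin 2) (c : R) : (X i - C c : MvPolynomial (Fin 2) R) ≠ 0 := fun h => by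
    simpa [h] using totalDegree_X_sub_C i c
  have h₂ := mul_ne_zero (hne 0 1) (hne 0 (-1))
  have h₃ := mul_ne_zero h₂ (hne 1 1)
  rw [squareBubble, totalDegree_mul_of_isDomain (mul_ne_zero h₃ (hne 1 (-1))) hr,
    totalDegree_mul_of_isDomain h₃ (hne 1 (-1)), totalDegree_mul_of_isDomain h₂ (hne 1 1),
    totalDegree_mul_of_isDomain (hne 0 1) (hne 0 (-1))]
  simp only [totalDegree_X_sub_C]
  ring

end Square

end MvPolynomialFactors

section Skew

open Finset MvPolynomial

variable {R : Type*} [CommRing R]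

theorem MvPolynomial.eval_rename_swap (s t : R) (w : MvPolynomial (Fin 2) R) :
    eval ![s, t] (rename (Equiv.swap 0 1) w) = eval ![t, s] w := by
  rw [eval_rename]
  congr 2
  funext j
  fin_cases j <;> rfl

noncomputable def skewPoly (m : ℕ) : MvPolynomial (Fin 2) R :=
  X 0 ^ m * X 1 - X 0 * X 1 ^ m

theorem rename_swap_skewPoly (m : ℕ) :
    rename (Equiv.swap 0 1) (skewPoly m : MvPolynomial (Fin 2) R) = -skewPoly m := by
  simp [skewPoly]; ring

theorem sliceAt_skewPoly (s : R) (m : ℕ) :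
    sliceAt s (skewPoly m) =
      Polynomial.C (s ^ m) * Polynomial.X - Polynomial.C s * Polynomial.X ^ m := by
  simp [sliceAt, skewPoly]

theorem totalDegree_skewPoly_le [Nontrivial R] (m : ℕ) :
    (skewPoly m : MvPolynomial (Fin 2) R).totalDegree ≤ m + 1 := by
  refine (totalDegree_sub _ _).trans (max_le ?_ ?_) <;>
    refine (totalDegree_mul _ _).trans ?_ <;> simp [totalDegree_X, totalDegree_X_pow, add_comm]

theorem C_mul_skewPoly_eq_zero {m : ℕ} {a : R}
    (h : a * (skewPoly m).coeff (Finsupp.single 0 1 + Finsupp.single 1 m) = 0) :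
    C a * skewPoly m = 0 := by
  rcases eq_or_ne m 1 with rfl | hm
  · simp [skewPoly]
  · have hcoeff : (skewPoly m : MvPolynomial (Fin 2) R).coeff
        (Finsupp.single 0 1 + Finsupp.single 1 m) = -1 := by
      rw [skewPoly, coeff_sub, X_pow_eq_monomial, X_pow_eq_monomial, X, X, monomial_mul,
        monomial_mul, coeff_monomial, coeff_monomial,
        if_neg fun h => hm (by simpa using congrArg (· 0) h), if_pos rfl]
      ring
    simp_all

variable [IsDomain R]

theorem sliceAt_eq_C_mul_nodal {ι : Type*} {S : Finset ι} {v : ι → R} (hv : Set.InjOn v S)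
    {w : MvPolynomial (Fin 2) R} (hw : w.totalDegree ≤ #S + 1) {s : R}
    (hdeg : (sliceAt s w).natDegree ≤ #S) (hs : ∀ i ∈ S, eval ![s, v i] w = 0) :
    sliceAt s w = Polynomial.C (w.coeff (Finsupp.single 1 #S) +
      w.coeff (Finsupp.single 0 1 + Finsupp.single 1 #S) * s) * Lagrange.nodal S v := by
  rw [← coeff_sliceAt_of_totalDegree_le s hw]
  exact Lagrange.eq_C_mul_nodal_of_eval_eq_zero hv hdeg fun i hi => by
    rw [eval_sliceAt]; exact hs i hi

theorem eval_add_skewPoly_eq_mul_nodal {ι : Type*} {S : Finset ι} (hS : S.Nonempty)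
    {v : ι → R} (hv : Set.InjOn v S) {p : MvPolynomial (Fin 2) R} (hp : p.totalDegree ≤ #S)
    (a s : R) (hs : ∀ i ∈ S, eval ![s, v i] (p + C a * skewPoly #S) = 0) (t : R) :
    eval ![s, t] (p + C a * skewPoly #S) =
      ((p + C a * skewPoly #S).coeff (Finsupp.single 1 #S) +
        a * (skewPoly #S).coeff (Finsupp.single 0 1 + Finsupp.single 1 #S) * s) *
        (Lagrange.nodal S v).eval t := by
  have hS : 1 ≤ #S := hS.card_pos
  have htop : p.coeff (Finsupp.single 0 1 + Finsupp.single 1 #S) = 0 := by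
    by_contra h
    have := add_le_totalDegree_of_mem_support (mem_support_iff.mpr h)
    simp at this
    omega
  have hdeg : (p + C a * skewPoly #S).totalDegree ≤ #S + 1 := by
    refine (totalDegree_add _ _).trans (max_le (by omega) ?_)
    rw [C_mul']
    exact (totalDegree_smul_le _ _).trans (totalDegree_skewPoly_le _)
  have hslice : (sliceAt s (p + C a * skewPoly #S)).natDegree ≤ #S := by
    rw [C_mul', map_add, map_smul, sliceAt_skewPoly]
    refine Polynomial.natDegree_add_le_of_degree_le ((natDegree_sliceAt_le s p).trans hp) ?_
    refine (Polynomial.natDegree_smul_le _ _).trans ?_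
    refine (Polynomial.natDegree_sub_le_of_le ((Polynomial.natDegree_C_mul_le _ _).trans
      Polynomial.natDegree_X_le) (Polynomial.natDegree_C_mul_X_pow_le _ _)).trans ?_
    exact max_le hS le_rfl
  rw [← eval_sliceAt, sliceAt_eq_C_mul_nodal hv hdeg hslice hs, Polynomial.eval_mul,
    Polynomial.eval_C, coeff_add (Finsupp.single 0 1 + Finsupp.single 1 #S), coeff_C_mul, htop,
    zero_add]

end Skew

section GaussNodes

open Finset MvPolynomial

variable {K : Type*} [Field K] [CharZero K]

theorem card_Icc_neg_self (k : ℕ) : #(Icc (-(k : ℤ)) k) = 2 * k + 1 := by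
  rw [Int.card_Icc]; omega

theorem C_mul_skewPoly_eq_zero_and_vanishes_on_boundary {k : ℕ} {g : ℤ → K}
    (hinj : Set.InjOn g (Icc (-(k : ℤ)) k)) (hsym : ∀ i ∈ Icc (-(k : ℤ)) k, g (-i) = -g i)
    (hone : ∀ i ∈ Icc (-(k : ℤ)) k, g i ≠ 1)
    {p : MvPolynomial (Fin 2) K} (hp : p.totalDegree ≤ 2 * k + 1) (a : K)
    (hG : ∀ i ∈ Icc (-(k : ℤ)) k,
      eval ![1, g i] (p + C a * skewPoly (2 * k + 1)) = 0 ∧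
        eval ![-1, g i] (p + C a * skewPoly (2 * k + 1)) = 0 ∧
        eval ![g i, 1] (p + C a * skewPoly (2 * k + 1)) = 0 ∧
        eval ![g i, -1] (p + C a * skewPoly (2 * k + 1)) = 0) :
    C a * skewPoly (2 * k + 1) = 0 ∧
      ∀ s : K, s = 1 ∨ s = -1 → ∀ t, eval ![s, t] p = 0 ∧ eval ![t, s] p = 0 := by
  set S := Icc (-(k : ℤ)) k
  have hS : #S = 2 * k + 1 := card_Icc_neg_self k
  rw [← hS] at hp hG ⊢
  have hSne : S.Nonempty := ⟨0, by simp [S]⟩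
  set Φ := Lagrange.nodal S g
  set ρ := (skewPoly #S : MvPolynomial (Fin 2) K).coeff (Finsupp.single 0 1 + Finsupp.single 1 #S)
  set w := p + C a * skewPoly #S
  set w' := rename (Equiv.swap 0 1) p + C (-a) * skewPoly #S
  have hw' : w' = rename (Equiv.swap 0 1) w := by simp [w, w', rename_swap_skewPoly]
  set β := w.coeff (Finsupp.single 1 #S)
  set β' := w'.coeff (Finsupp.single 1 #S)
  have hrow (s : K) (hs : s = 1 ∨ s = -1) (t : K) :
      eval ![s, t] w = (β + a * ρ * s) * Φ.eval t :=
    eval_add_skewPoly_eq_mul_nodal hSne hinj hp a s (fun i hi => by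
      rcases hs with rfl | rfl
      exacts [(hG i hi).1, (hG i hi).2.1]) t
  have hcol (s : K) (hs : s = 1 ∨ s = -1) (t : K) :
      eval ![t, s] w = (β' + -a * ρ * s) * Φ.eval t := by
    rw [← eval_rename_swap, ← hw']
    refine eval_add_skewPoly_eq_mul_nodal hSne hinj ((totalDegree_rename_le _ _).trans hp) (-a) s
      (fun i hi => ?_) t
    change eval ![s, g i] w' = 0
    rw [hw', eval_rename_swap]
    rcases hs with rfl | rfl
    exacts [(hG i hi).2.2.1, (hG i hi).2.2.2]
  have hΦ : Φ.eval (-1) = -Φ.eval 1 := by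
    rw [Lagrange.eval_neg_nodal (fun i hi => by simp [S] at hi ⊢; omega) hsym, hS,
      Odd.neg_one_pow ⟨k, rfl⟩, neg_one_mul]
  have hΦ1 : Φ.eval 1 ≠ 0 := Lagrange.eval_nodal_not_at_node fun i hi => (hone i hi).symm
  -- the values at the corners (1, 1), (1, -1), (-1, 1), each read off along both edges
  have e₁ := (hrow 1 (by simp) 1).symm.trans (hcol 1 (by simp) 1)
  have e₂ := (hrow 1 (by simp) (-1)).symm.trans (hcol (-1) (by simp) 1)
  have e₃ := (hrow (-1) (by simp) 1).symm.trans (hcol 1 (by simp) (-1))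
  rw [hΦ] at e₂ e₃
  have hβ : β = 0 := (mul_eq_zero.mp (by linear_combination (e₁ + e₃) / 2)).resolve_right hΦ1
  have hβ' : β' = 0 := (mul_eq_zero.mp (by linear_combination -(e₁ + e₂) / 2)).resolve_right hΦ1
  have haρ : a * ρ = 0 :=
    (mul_eq_zero.mp (by linear_combination -(e₂ + e₃) / 4)).resolve_right hΦ1
  have hskew : C a * skewPoly #S = 0 := C_mul_skewPoly_eq_zero haρ
  have hwp : w = p := add_eq_left.mpr hskew
  refine ⟨hskew, fun s hs t => ⟨?_, ?_⟩⟩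
  · rw [← hwp, hrow s hs t, hβ]; linear_combination (s * Φ.eval t) * haρ
  · rw [← hwp, hcol s hs t, hβ']; linear_combination (-s * Φ.eval t) * haρ

end GaussNodes

theorem stmt_2_general (k : ℕ) (g : ℤ → ℝ)
    (hmem : ∀ i ∈ Finset.Icc (-(k : ℤ)) (k : ℤ), g i ∈ Set.Ioo (-1 : ℝ) 1)
    (hinj : Set.InjOn g (Finset.Icc (-(k : ℤ)) (k : ℤ)))
    (hsym : ∀ i ∈ Finset.Icc (-(k : ℤ)) (k : ℤ), g (-i) = -g i)
    (I : Finset (ℝ × ℝ))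
    (hI : ∀ r ∈ I, r.1 ∈ Set.Ioo (-1 : ℝ) 1 ∧ r.2 ∈ Set.Ioo (-1 : ℝ) 1)
    (hunisolv : ∀ q : MvPolynomial (Fin 2) ℝ,
      (∀ d ∈ q.support, ((d 0 + d 1 : ℕ) : ℤ) ≤ 2 * (k : ℤ) - 3) →
      (∀ r ∈ I, MvPolynomial.eval ![r.1, r.2] q = 0) → q = 0)
    -- v ∈ R_m(K̂) with m = 2k+1
    (v p : MvPolynomial (Fin 2) ℝ) (a₀ : ℝ)
    (hp : p.totalDegree ≤ 2 * k + 1)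
    (hv : v = p + MvPolynomial.C a₀ *
      (MvPolynomial.X 0 ^ (2 * k + 1) * MvPolynomial.X 1 -
        MvPolynomial.X 0 * MvPolynomial.X 1 ^ (2 * k + 1)))
    -- v vanishes at every point of G
    (hG : ∀ i ∈ Finset.Icc (-(k : ℤ)) (k : ℤ),
      MvPolynomial.eval ![1, g i] v = 0 ∧ MvPolynomial.eval ![-1, g i] v = 0 ∧
      MvPolynomial.eval ![g i, 1] v = 0 ∧ MvPolynomial.eval ![g i, -1] v = 0)
    -- v vanishes at every point of I
    (hIv : ∀ r ∈ I, MvPolynomial.eval ![r.1, r.2] v = 0) :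
    v = 0 := by
  rw [hv] at hG
  obtain ⟨hskew, hboundary⟩ :=
    C_mul_skewPoly_eq_zero_and_vanishes_on_boundary hinj hsym (fun i hi => (hmem i hi).2.ne) hp a₀ hG
  have hvp : v = p := hv.trans (add_eq_left.mpr hskew)
  rw [hvp] at hIv ⊢
  obtain ⟨r, rfl⟩ := squareBubble_dvd hboundary
  suffices r = 0 by rw [this, mul_zero]
  by_contra hr
  refine hr (hunisolv r (fun d hd => ?_) fun x hx => ?_)
  · have := MvPolynomial.add_le_totalDegree_of_mem_support hd
    have := totalDegree_squareBubble_mul hr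
    push_cast
    omega
  · obtain ⟨⟨h₁, h₂⟩, h₃, h₄⟩ := hI x hx
    have hb : MvPolynomial.eval ![x.1, x.2] (squareBubble : MvPolynomial (Fin 2) ℝ) ≠ 0 := by
      rw [eval_squareBubble]
      refine mul_ne_zero (mul_ne_zero ?_ ?_) (mul_ne_zero ?_ ?_) <;> intro h <;> linarith
    simpa [hb] using hIv x hx

theorem stmt_2 (k : ℕ) (g : ℤ → ℝ)
    (hzero : ∀ i ∈ Finset.Icc (-(k : ℤ)) (k : ℤ),
      (legendreP (2 * k + 1)).eval (g i) = 0)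
    (hmem : ∀ i ∈ Finset.Icc (-(k : ℤ)) (k : ℤ), g i ∈ Set.Ioo (-1 : ℝ) 1)
    (hinj : Set.InjOn g (Finset.Icc (-(k : ℤ)) (k : ℤ)))
    (hsym : ∀ i ∈ Finset.Icc (-(k : ℤ)) (k : ℤ), g (-i) = -g i)
    (I : Finset (ℝ × ℝ))
    (hI : ∀ r ∈ I, r.1 ∈ Set.Ioo (-1 : ℝ) 1 ∧ r.2 ∈ Set.Ioo (-1 : ℝ) 1)
    (hunisolv : ∀ q : MvPolynomial (Fin 2) ℝ,
      (∀ d ∈ q.support, ((d 0 + d 1 : ℕ) : ℤ) ≤ 2 * (k : ℤ) - 3) →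
      (∀ r ∈ I, MvPolynomial.eval ![r.1, r.2] q = 0) → q = 0)
    -- v ∈ R_m(K̂) with m = 2k+1
    (v p : MvPolynomial (Fin 2) ℝ) (a₀ : ℝ)
    (hp : p.totalDegree ≤ 2 * k + 1)
    (hv : v = p + MvPolynomial.C a₀ *
      (MvPolynomial.X 0 ^ (2 * k + 1) * MvPolynomial.X 1 -
        MvPolynomial.X 0 * MvPolynomial.X 1 ^ (2 * k + 1)))
    -- v vanishes at every point of G
    (hG : ∀ i ∈ Finset.Icc (-(k : ℤ)) (k : ℤ),
      MvPolynomial.eval ![1, g i] v = 0 ∧ MvPolynomial.eval ![-1, g i] v = 0 ∧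
      MvPolynomial.eval ![g i, 1] v = 0 ∧ MvPolynomial.eval ![g i, -1] v = 0)
    -- v vanishes at every point of I
    (hIv : ∀ r ∈ I, MvPolynomial.eval ![r.1, r.2] v = 0) :
    v = 0 :=
  stmt_2_general k g hmem hinj hsym I hI hunisolv v p a₀ hp hv hG hIv
end

section
/- Let k ≥ 0, m = 2k+1, and let g_{-k}, …, g_k be the zeros of the Legendre polynomial L_{2k+1}, which are 2k+1 distinct points of (−1,1) indexed so that g_{-i} = −g_i (hence g_0 = 0). Let G := {(1,g_i), (−1,g_i), (g_i,1), (g_i,−1) : i = −k, …, k} and let I be a finite subset of the open square (−1,1)² such that the only polynomial of total degree ≤ 2k−3 vanishing at every point of I is the zero polynomial. If v ∈ ER_m(K̂) vanishes at every point of G ∪ I, then v is the zero polynomial. -/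
open Finsupp (single)

namespace Polynomial

theorem coeff_mul_X_natDegree {R : Type*} [Semiring R] (Q : R[X]) :
    (Q * X).coeff Q.natDegree = Q.nextCoeff := by
  rw [nextCoeff]
  rcases h : Q.natDegree with _ | n
  · simp
  · simp [coeff_mul_X]

theorem eq_mul_linear_of_monic_dvd {K : Type*} [Field K] {Q t : K[X]} (hQ : Q.Monic)
    (hnext : Q.nextCoeff = 0) (hdvd : Q ∣ t) (ht : t.natDegree ≤ Q.natDegree + 1) :
    t = Q * (C (t.coeff Q.natDegree) + C (t.coeff (Q.natDegree + 1)) * X) := by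
  obtain ⟨r, rfl⟩ := hdvd
  have hr : r.natDegree ≤ 1 := by
    rcases eq_or_ne r 0 with rfl | hr0
    · simp
    · rw [hQ.natDegree_mul' hr0] at ht; omega
  have hr_eq : r = C (r.coeff 0) + C (r.coeff 1) * X := by
    conv_lhs => rw [eq_X_add_C_of_natDegree_le_one hr]
    ring
  have hlead : Q.coeff Q.natDegree = 1 := hQ
  have htop : Q.coeff (Q.natDegree + 1) = 0 := coeff_eq_zero_of_natDegree_lt (by omega)
  have hexp : Q * r = C (r.coeff 0) * Q + C (r.coeff 1) * (Q * X) := by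
    conv_lhs => rw [hr_eq]
    ring
  have hc₀ : (Q * r).coeff Q.natDegree = r.coeff 0 := by
    rw [hexp, coeff_add, coeff_C_mul, coeff_C_mul, coeff_mul_X_natDegree, hlead, hnext]; ring
  have hc₁ : (Q * r).coeff (Q.natDegree + 1) = r.coeff 1 := by
    rw [hexp, coeff_add, coeff_C_mul, coeff_C_mul, coeff_mul_X, hlead, htop]; ring
  rw [hc₀, hc₁, ← hr_eq]

end Polynomial

namespace Lagrange

open Polynomial

variable {ι K : Type*} {s : Finset ι} {v : ι → K}

theorem nodal_dvd [Field K] (hvs : Set.InjOn v s) {t : K[X]}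
    (ht : ∀ i ∈ s, t.eval (v i) = 0) : nodal s v ∣ t := by
  rw [nodal_eq]
  refine Finset.prod_dvd_of_coprime (fun i hi j hj hij => ?_)
    fun i hi => dvd_iff_isRoot.mpr (ht i hi)
  exact isCoprime_X_sub_C_of_isUnit_sub (sub_ne_zero.mpr fun h => hij (hvs hi hj h)).isUnit

theorem nextCoeff_nodal_eq_zero [InvolutiveNeg ι] [Field K] [CharZero K]
    (hs : ∀ i ∈ s, -i ∈ s) (hv : ∀ i ∈ s, v (-i) = -v i) : (nodal s v).nextCoeff = 0 := by
  have hsum : ∑ i ∈ s, v i = -∑ i ∈ s, v i := by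
    rw [← Finset.sum_neg_distrib]
    exact Finset.sum_nbij' Neg.neg Neg.neg hs hs (by simp) (by simp) fun i hi => by
      rw [hv i hi, neg_neg]
  rw [nodal_eq, prod_X_sub_C_nextCoeff, neg_eq_zero, self_eq_neg.mp hsum]

theorem eval_neg_nodal_s4 [InvolutiveNeg ι] [CommRing K] (hs : ∀ i ∈ s, -i ∈ s)
    (hv : ∀ i ∈ s, v (-i) = -v i) (hodd : Odd s.card) (x : K) :
    (nodal s v).eval (-x) = -(nodal s v).eval x := by
  have hreindex : ∏ i ∈ s, (-x - v i) = ∏ i ∈ s, -(x - v i) :=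
    Finset.prod_nbij' Neg.neg Neg.neg hs hs (by simp) (by simp) fun i hi => by
      rw [hv i hi]; ring
  rw [eval_nodal, eval_nodal, hreindex, Finset.prod_neg, hodd.neg_one_pow, neg_one_mul]

end Lagrange

namespace MvPolynomial

section CommRing

variable {R : Type*} [CommRing R]

noncomputable def traceFst (a : R) : MvPolynomial (Fin 2) R →ₐ[R] Polynomial R :=
  aeval ![Polynomial.C a, Polynomial.X]

noncomputable def swapVars : MvPolynomial (Fin 2) R →ₐ[R] MvPolynomial (Fin 2) R :=
  rename (Equiv.swap 0 1)

theorem add_le_totalDegree_fin_two {w : MvPolynomial (Fin 2) R} {d : Fin 2 →₀ ℕ}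
    (hd : d ∈ w.support) : d 0 + d 1 ≤ w.totalDegree := by
  simpa [Finsupp.sum_fintype] using le_totalDegree hd

theorem coeff_eq_zero_of_totalDegree_lt_fin_two {w : MvPolynomial (Fin 2) R}
    {d : Fin 2 →₀ ℕ} (h : w.totalDegree < d 0 + d 1) : coeff d w = 0 :=
  notMem_support_iff.mp fun hd => (add_le_totalDegree_fin_two hd).not_gt h

theorem eval_traceFst (a y : R) (w : MvPolynomial (Fin 2) R) :
    (traceFst a w).eval y = eval ![a, y] w := by
  rw [← Polynomial.coe_aeval_eq_eval, ← AlgHom.comp_apply, traceFst, comp_aeval, aeval_eq_eval]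
  congr 2
  funext i; fin_cases i <;> simp

theorem traceFst_monomial (a : R) (d : Fin 2 →₀ ℕ) (c : R) :
    traceFst a (monomial d c) = Polynomial.C (c * a ^ d 0) * Polynomial.X ^ d 1 := by
  rw [traceFst, aeval_monomial, Finsupp.prod_fintype _ _ fun _ => pow_zero _, Fin.prod_univ_two]
  simp only [Matrix.cons_val_zero, Matrix.cons_val_one, Polynomial.algebraMap_eq,
    Polynomial.C_mul, Polynomial.C_pow]
  ring

theorem natDegree_traceFst_le (a : R) (w : MvPolynomial (Fin 2) R) :
    (traceFst a w).natDegree ≤ w.totalDegree := by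
  conv_lhs => rw [w.as_sum, map_sum]
  refine Polynomial.natDegree_sum_le_of_forall_le _ _ fun d hd => ?_
  rw [traceFst_monomial]
  exact (Polynomial.natDegree_C_mul_X_pow_le _ _).trans
    (le_add_self.trans (add_le_totalDegree_fin_two hd))

theorem coeff_traceFst (a : R) (w : MvPolynomial (Fin 2) R) (j : ℕ) :
    (traceFst a w).coeff j = ∑ d ∈ w.support with d 1 = j, coeff d w * a ^ d 0 := by
  conv_lhs => rw [w.as_sum, map_sum]
  rw [Polynomial.finsetSum_coeff, Finset.sum_filter]
  refine Finset.sum_congr rfl fun d _ => ?_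
  rw [traceFst_monomial, Polynomial.coeff_C_mul_X_pow]
  simp only [eq_comm]

theorem coeff_traceFst_eq_sum_of_subset (a : R) {w : MvPolynomial (Fin 2) R} {j : ℕ}
    (T : Finset (Fin 2 →₀ ℕ)) (hT : ∀ d ∈ w.support, d 1 = j → d ∈ T)
    (hTj : ∀ d ∈ T, d 1 = j) : (traceFst a w).coeff j = ∑ d ∈ T, coeff d w * a ^ d 0 := by
  rw [coeff_traceFst]
  refine Finset.sum_subset (fun d hd => ?_) fun d hdT hd => ?_
  · rw [Finset.mem_filter] at hd
    exact hT d hd.1 hd.2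
  · have : d ∉ w.support := fun h => hd (Finset.mem_filter.mpr ⟨h, hTj d hdT⟩)
    rw [notMem_support_iff.mp this, zero_mul]

theorem coeff_traceFst_succ_of_totalDegree_le_succ (a : R) {w : MvPolynomial (Fin 2) R}
    {n : ℕ} (hw : w.totalDegree ≤ n + 1) :
    (traceFst a w).coeff (n + 1) = coeff (single 1 (n + 1)) w := by
  rw [coeff_traceFst_eq_sum_of_subset a {single 1 (n + 1)} (fun d hd hd₁ => ?_) (by simp)]
  · simp
  have hd₀ : d 0 = 0 := by have := add_le_totalDegree_fin_two hd; omega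
  rw [Finset.mem_singleton]
  ext i; fin_cases i <;> simp [hd₀, hd₁]

theorem coeff_traceFst_of_totalDegree_le_succ (a : R) {w : MvPolynomial (Fin 2) R} {n : ℕ}
    (hw : w.totalDegree ≤ n + 1) :
    (traceFst a w).coeff n = coeff (single 1 n) w + a * coeff (single 0 1 + single 1 n) w := by
  have hne : single 1 n ≠ single (0 : Fin 2) 1 + single 1 n := by
    intro h; simpa using DFunLike.congr_fun h 0
  rw [coeff_traceFst_eq_sum_of_subset a {single 1 n, single 0 1 + single 1 n}
    (fun d hd hd₁ => ?_) (by simp), Finset.sum_pair hne]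
  · simp only [Finsupp.coe_add, Pi.add_apply, Finsupp.single_eq_same, Finsupp.single_eq_of_ne,
      ne_eq, zero_ne_one, not_false_eq_true, pow_zero, pow_one, add_zero]
    ring
  have hd₀ : d 0 ≤ 1 := by have := add_le_totalDegree_fin_two hd; omega
  rw [Finset.mem_insert, Finset.mem_singleton]
  interval_cases h : d 0
  · left; ext i; fin_cases i <;> simp [h, hd₁]
  · right; ext i; fin_cases i <;> simp [h, hd₁]

theorem X_zero_sub_C_dvd_sub_aeval (a : R) (w : MvPolynomial (Fin 2) R) :
    X 0 - C a ∣ w - aeval ![C a, X 1] w := by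
  induction w using MvPolynomial.induction_on with
  | C c => simp
  | add u w hu hw => simpa [add_sub_add_comm] using dvd_add hu hw
  | mul_X u i hu =>
    have hsplit : u * X i - aeval ![C a, X 1] (u * X i) =
        (u - aeval ![C a, X 1] u) * X i + aeval ![C a, X 1] u * (X i - ![C a, X 1] i) := by
      rw [map_mul, aeval_X]; ring
    rw [hsplit]
    refine dvd_add (dvd_mul_of_dvd_left hu _) (dvd_mul_of_dvd_right ?_ _)
    fin_cases i <;> simp

theorem X_zero_sub_C_dvd_of_traceFst_eq_zero {a : R} {w : MvPolynomial (Fin 2) R}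
    (h : traceFst a w = 0) : X 0 - C a ∣ w := by
  have hsubst : aeval ![C a, X 1] w =
      Polynomial.aeval (X 1 : MvPolynomial (Fin 2) R) (traceFst a w) := by
    rw [← AlgHom.comp_apply, traceFst, comp_aeval]
    congr 2
    funext i; fin_cases i <;> simp [algebraMap_eq]
  simpa only [hsubst, h, map_zero, sub_zero] using X_zero_sub_C_dvd_sub_aeval a w

@[simp] theorem swapVars_X_zero : swapVars (X 0 : MvPolynomial (Fin 2) R) = X 1 := by
  simp [swapVars]

@[simp] theorem swapVars_X_one : swapVars (X 1 : MvPolynomial (Fin 2) R) = X 0 := by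
  simp [swapVars]

@[simp] theorem swapVars_C (c : R) : swapVars (C c : MvPolynomial (Fin 2) R) = C c :=
  rename_C _ _

theorem swapVars_swapVars (w : MvPolynomial (Fin 2) R) : swapVars (swapVars w) = w := by
  rw [swapVars, rename_rename, ← Equiv.coe_trans, Equiv.swap_swap, Equiv.coe_refl,
    rename_id_apply]

theorem eval_swapVars (s t : R) (w : MvPolynomial (Fin 2) R) :
    eval ![s, t] (swapVars w) = eval ![t, s] w := by
  rw [swapVars, eval_rename]
  congr 2
  funext i; fin_cases i <;> simp

theorem totalDegree_swapVars_le (w : MvPolynomial (Fin 2) R) :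
    (swapVars w).totalDegree ≤ w.totalDegree :=
  totalDegree_rename_le _ _

theorem coeff_swapVars_eq_neg {w : MvPolynomial (Fin 2) R} {n : ℕ}
    (hsym : (w + swapVars w).totalDegree ≤ n) {d : Fin 2 →₀ ℕ} (hd : d 0 + d 1 = n + 1) :
    coeff d (swapVars w) = -coeff d w := by
  have := coeff_eq_zero_of_totalDegree_lt_fin_two (d := d) (hsym.trans_lt (by omega))
  rw [coeff_add] at this
  linear_combination this

end CommRing

section Field

variable {K : Type*} [Field K]

theorem X_zero_sub_C_mul_dvd_of_traceFst_eq_zero {a b : K} (hab : a ≠ b)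
    {w : MvPolynomial (Fin 2) K} (ha : traceFst a w = 0) (hb : traceFst b w = 0) :
    (X 0 - C a) * (X 0 - C b) ∣ w := by
  obtain ⟨u, rfl⟩ := X_zero_sub_C_dvd_of_traceFst_eq_zero ha
  refine mul_dvd_mul_left _ (X_zero_sub_C_dvd_of_traceFst_eq_zero ?_)
  have htr : traceFst b (X 0 - C a : MvPolynomial (Fin 2) K) = Polynomial.C (b - a) := by
    simp [traceFst]
  rw [map_mul, htr] at hb
  exact (mul_eq_zero.mp hb).resolve_left (Polynomial.C_ne_zero.mpr (sub_ne_zero.mpr hab.symm))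

theorem X_one_sub_C_mul_dvd_of_traceFst_swapVars_eq_zero {a b : K} (hab : a ≠ b)
    {w : MvPolynomial (Fin 2) K} (ha : traceFst a (swapVars w) = 0)
    (hb : traceFst b (swapVars w) = 0) : (X 1 - C a) * (X 1 - C b) ∣ w := by
  simpa [swapVars_swapVars] using
    map_dvd swapVars (X_zero_sub_C_mul_dvd_of_traceFst_eq_zero hab ha hb)

end Field

end MvPolynomial

open MvPolynomial

section Bubble

variable {R : Type*} [CommRing R]

noncomputable def bubble : MvPolynomial (Fin 2) R := (X 0 ^ 2 - 1) * (X 1 ^ 2 - 1)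

theorem eval_bubble (x : Fin 2 → R) : eval x bubble = (x 0 ^ 2 - 1) * (x 1 ^ 2 - 1) := by
  simp [bubble]

theorem totalDegree_X_sq_sub_one [Nontrivial R] (i : Fin 2) :
    (X i ^ 2 - 1 : MvPolynomial (Fin 2) R).totalDegree = 2 := by
  rw [sub_eq_add_neg, totalDegree_add_eq_left_of_totalDegree_lt] <;> simp

theorem totalDegree_bubble_mul [IsDomain R] {q : MvPolynomial (Fin 2) R} (hq : q ≠ 0) :
    (bubble * q).totalDegree = q.totalDegree + 4 := by
  have hne (i : Fin 2) : (X i ^ 2 - 1 : MvPolynomial (Fin 2) R) ≠ 0 := fun h => by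
    simpa [h] using totalDegree_X_sq_sub_one (R := R) i
  rw [bubble, totalDegree_mul_of_isDomain (mul_ne_zero (hne 0) (hne 1)) hq,
    totalDegree_mul_of_isDomain (hne 0) (hne 1), totalDegree_X_sq_sub_one,
    totalDegree_X_sq_sub_one]
  ring

theorem bubble_dvd_of_traceFst_eq_zero {K : Type*} [Field K] [CharZero K]
    {w : MvPolynomial (Fin 2) K} (h₁ : traceFst 1 w = 0) (h₂ : traceFst (-1) w = 0)
    (h₃ : traceFst 1 (swapVars w) = 0) (h₄ : traceFst (-1) (swapVars w) = 0) :
    bubble ∣ w := by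
  have hne : (1 : K) ≠ -1 := by norm_num
  have hfac (i : Fin 2) :
      (X i - C 1) * (X i - C (-1)) = (X i ^ 2 - 1 : MvPolynomial (Fin 2) K) := by
    rw [map_neg, map_one]; ring
  obtain ⟨u, rfl⟩ := X_one_sub_C_mul_dvd_of_traceFst_swapVars_eq_zero hne h₃ h₄
  have htr (c : K) : traceFst c ((X 1 - C 1) * (X 1 - C (-1)) : MvPolynomial (Fin 2) K) =
      (Polynomial.X - Polynomial.C 1) * (Polynomial.X - Polynomial.C (-1)) := by
    simp [traceFst]
  have hne₀ :
      (Polynomial.X - Polynomial.C 1) * (Polynomial.X - Polynomial.C (-1) : Polynomial K) ≠ 0 :=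
    mul_ne_zero (Polynomial.X_sub_C_ne_zero _) (Polynomial.X_sub_C_ne_zero _)
  rw [map_mul, htr] at h₁ h₂
  rw [bubble, mul_comm (X 0 ^ 2 - 1), ← hfac 0, ← hfac 1]
  exact mul_dvd_mul_left _ (X_zero_sub_C_mul_dvd_of_traceFst_eq_zero hne
    ((mul_eq_zero.mp h₁).resolve_left hne₀) ((mul_eq_zero.mp h₂).resolve_left hne₀))

theorem eq_zero_of_eq_bubble_mul {I : Finset (ℝ × ℝ)} {N : ℤ}
    {w q : MvPolynomial (Fin 2) ℝ} (hwq : w = bubble * q) (hw : (w.totalDegree : ℤ) ≤ N + 4)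
    (hI : ∀ r ∈ I, r.1 ∈ Set.Ioo (-1 : ℝ) 1 ∧ r.2 ∈ Set.Ioo (-1 : ℝ) 1)
    (hunisolv : ∀ q : MvPolynomial (Fin 2) ℝ,
      (∀ d ∈ q.support, ((d 0 + d 1 : ℕ) : ℤ) ≤ N) →
      (∀ r ∈ I, eval ![r.1, r.2] q = 0) → q = 0)
    (hwI : ∀ r ∈ I, eval ![r.1, r.2] w = 0) : w = 0 := by
  suffices q = 0 by rw [hwq, this, mul_zero]
  refine hunisolv q (fun d hd => ?_) fun r hr => ?_
  · have hq : q ≠ 0 := fun h => by simp [h] at hd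
    rw [hwq, totalDegree_bubble_mul hq] at hw
    have := add_le_totalDegree_fin_two hd
    omega
  · have h := hwI r hr
    rw [hwq, map_mul, eval_bubble] at h
    obtain ⟨⟨h₁, h₂⟩, h₃, h₄⟩ := hI r hr
    refine (mul_eq_zero.mp h).resolve_left (mul_ne_zero ?_ ?_)
    · simp only [Matrix.cons_val_zero]; nlinarith
    · simp only [Matrix.cons_val_one, Matrix.cons_val_fin_one]; nlinarith

end Bubble

section Enrichment

variable {R : Type*} [CommRing R]

noncomputable def enrichment (n : ℕ) (c₃ c₄ : R) : MvPolynomial (Fin 2) R :=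
  C c₃ * (X 0 ^ n * X 1 - X 0 * X 1 ^ n) + C c₄ * (X 0 ^ (n + 1) - X 1 ^ (n + 1))

theorem isHomogeneous_enrichment (n : ℕ) (c₃ c₄ : R) :
    (enrichment n c₃ c₄).IsHomogeneous (n + 1) := by
  have hXYn : (X 0 * X 1 ^ n : MvPolynomial (Fin 2) R).IsHomogeneous (n + 1) := by
    simpa [add_comm] using (isHomogeneous_X R 0).mul (isHomogeneous_X_pow 1 n)
  exact ((((isHomogeneous_X_pow 0 n).mul (isHomogeneous_X R 1)).sub hXYn).C_mul _).add
    (((isHomogeneous_X_pow 0 _).sub (isHomogeneous_X_pow 1 _)).C_mul _)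

theorem swapVars_enrichment (n : ℕ) (c₃ c₄ : R) :
    swapVars (enrichment n c₃ c₄) = -enrichment n c₃ c₄ := by
  simp only [enrichment, map_add, map_mul, map_sub, map_pow, swapVars_C, swapVars_X_zero,
    swapVars_X_one]
  ring

theorem enrichment_eq_zero_of_coeff {n : ℕ} {c₃ c₄ : R}
    (h₁ : coeff (single 1 (n + 1)) (enrichment n c₃ c₄) = 0)
    (h₂ : coeff (single 0 1 + single 1 n) (enrichment n c₃ c₄) = 0) :
    enrichment n c₃ c₄ = 0 := by
  rcases n with _ | _ | n
  · have hc : c₃ = c₄ := by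
      simpa [enrichment, X_pow_eq_monomial, coeff_monomial, coeff_mul_X', Finsupp.ext_iff,
        Fin.forall_fin_two, add_neg_eq_zero] using h₁
    rw [enrichment, hc]
    ring
  · have hc₄ : c₄ = 0 := by
      simpa [enrichment, X_pow_eq_monomial, coeff_monomial, coeff_mul_X', Finsupp.ext_iff,
        Fin.forall_fin_two] using h₁
    simp [enrichment, hc₄]
  · have hc₄ : c₄ = 0 := by
      simpa [enrichment, X_pow_eq_monomial, coeff_monomial, coeff_mul_X', coeff_X_mul',
        Finsupp.ext_iff, Fin.forall_fin_two] using h₁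
    have hc₃ : c₃ = 0 := by
      simpa [enrichment, X_pow_eq_monomial, coeff_monomial, coeff_mul_X', coeff_X_mul',
        Finsupp.ext_iff, Fin.forall_fin_two] using h₂
    simp [enrichment, hc₃, hc₄]

end Enrichment

section Edges

open Lagrange

variable {ι K : Type*} [InvolutiveNeg ι] [Field K] [CharZero K] {s : Finset ι} {v : ι → K}

theorem traceFst_eq_nodal_mul (hvs : Set.InjOn v s) (hs : ∀ i ∈ s, -i ∈ s)
    (hv : ∀ i ∈ s, v (-i) = -v i) {n : ℕ} (hn : s.card = n) {w : MvPolynomial (Fin 2) K}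
    (hw : w.totalDegree ≤ n + 1) {a : K} (ha : ∀ i ∈ s, eval ![a, v i] w = 0) :
    traceFst a w = nodal s v *
      (Polynomial.C (coeff (single 1 n) w + a * coeff (single 0 1 + single 1 n) w) +
        Polynomial.C (coeff (single 1 (n + 1)) w) * Polynomial.X) := by
  have hdeg : (nodal s v).natDegree = n := by rw [natDegree_nodal, hn]
  rw [← coeff_traceFst_of_totalDegree_le_succ a hw,
    ← coeff_traceFst_succ_of_totalDegree_le_succ a hw, ← hdeg]
  refine Polynomial.eq_mul_linear_of_monic_dvd nodal_monic (nextCoeff_nodal_eq_zero hs hv)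
    (nodal_dvd hvs fun i hi => by rw [eval_traceFst]; exact ha i hi) ?_
  rw [hdeg]
  exact (natDegree_traceFst_le a w).trans hw

theorem eval_eq_nodal_mul (hvs : Set.InjOn v s) (hs : ∀ i ∈ s, -i ∈ s)
    (hv : ∀ i ∈ s, v (-i) = -v i) {n : ℕ} (hn : s.card = n) {w : MvPolynomial (Fin 2) K}
    (hw : w.totalDegree ≤ n + 1) {a : K} (ha : ∀ i ∈ s, eval ![a, v i] w = 0) (y : K) :
    eval ![a, y] w = (nodal s v).eval y * (coeff (single 1 n) w +
      a * coeff (single 0 1 + single 1 n) w + coeff (single 1 (n + 1)) w * y) := by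
  rw [← eval_traceFst, traceFst_eq_nodal_mul hvs hs hv hn hw ha]
  simp

theorem coeff_eq_zero_of_vanishing_on_edges (hvs : Set.InjOn v s) (hs : ∀ i ∈ s, -i ∈ s)
    (hv : ∀ i ∈ s, v (-i) = -v i) {n : ℕ} (hn : s.card = n) (hodd : Odd n)
    (hv₁ : ∀ i ∈ s, v i ≠ 1) {w : MvPolynomial (Fin 2) K} (hw : w.totalDegree ≤ n + 1)
    (hsym : (w + swapVars w).totalDegree ≤ n)
    (hedge : ∀ i ∈ s, eval ![1, v i] w = 0 ∧ eval ![-1, v i] w = 0 ∧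
      eval ![v i, 1] w = 0 ∧ eval ![v i, -1] w = 0) :
    coeff (single 1 n) w = 0 ∧ coeff (single 0 1 + single 1 n) w = 0 ∧
      coeff (single 1 (n + 1)) w = 0 ∧ coeff (single 1 n) (swapVars w) = 0 := by
  have hσ : (swapVars w).totalDegree ≤ n + 1 := (totalDegree_swapVars_le w).trans hw
  have hA := coeff_swapVars_eq_neg hsym (d := single 1 (n + 1)) (by simp)
  have hC := coeff_swapVars_eq_neg hsym (d := single 0 1 + single 1 n) (by simp [add_comm])
  have hq : (nodal s v).eval 1 ≠ 0 := eval_nodal_not_at_node fun i hi => (hv₁ i hi).symm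
  have hq' : (nodal s v).eval (-1) = -(nodal s v).eval 1 := eval_neg_nodal_s4 hs hv (hn ▸ hodd) 1
  have hw₁ := eval_eq_nodal_mul hvs hs hv hn hw fun i hi => (hedge i hi).1
  have hw₂ := eval_eq_nodal_mul hvs hs hv hn hw fun i hi => (hedge i hi).2.1
  have hσ₁ := eval_eq_nodal_mul hvs hs hv hn hσ fun i hi => by
    rw [eval_swapVars]; exact (hedge i hi).2.2.1
  have hσ₂ := eval_eq_nodal_mul hvs hs hv hn hσ fun i hi => by
    rw [eval_swapVars]; exact (hedge i hi).2.2.2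
  -- each corner is seen both from a vertical edge of `w` and from one of `swapVars w`
  have corner (x y : K) : eval ![x, y] w = eval ![y, x] (swapVars w) :=
    (eval_swapVars y x w).symm
  have e₁ := corner 1 1
  have e₂ := corner 1 (-1)
  have e₃ := corner (-1) 1
  have e₄ := corner (-1) (-1)
  rw [hw₁, hσ₁] at e₁
  rw [hw₁, hσ₂] at e₂
  rw [hw₂, hσ₁] at e₃
  rw [hw₂, hσ₂] at e₄
  rw [hA, hC] at e₁ e₂ e₃ e₄
  rw [hq'] at e₂ e₃ e₄
  set q := (nodal s v).eval 1
  set A := coeff (single 1 (n + 1)) w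
  set B := coeff (single 1 n) w
  set C := coeff (single 0 1 + single 1 n) w
  set B' := coeff (single 1 n) (swapVars w)
  have u₁ : B - B' + 2 * C + 2 * A = 0 := mul_left_cancel₀ hq (by linear_combination e₁)
  have u₂ : B + B' + 2 * C - 2 * A = 0 := mul_left_cancel₀ hq (by linear_combination -e₂)
  have u₃ : B + B' - 2 * C + 2 * A = 0 := mul_left_cancel₀ hq (by linear_combination e₃)
  have u₄ : B - B' - 2 * C - 2 * A = 0 := mul_left_cancel₀ hq (by linear_combination -e₄)
  exact ⟨by linear_combination (u₁ + u₂ + u₃ + u₄) / 4,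
    by linear_combination (u₁ + u₂ - u₃ - u₄) / 8,
    by linear_combination (u₁ - u₂ + u₃ - u₄) / 8,
    by linear_combination (u₂ + u₃ - u₁ - u₄) / 4⟩

theorem bubble_dvd_of_vanishing_on_edges (hvs : Set.InjOn v s) (hs : ∀ i ∈ s, -i ∈ s)
    (hv : ∀ i ∈ s, v (-i) = -v i) {n : ℕ} (hn : s.card = n) (hodd : Odd n)
    (hv₁ : ∀ i ∈ s, v i ≠ 1) {w : MvPolynomial (Fin 2) K} (hw : w.totalDegree ≤ n + 1)
    (hsym : (w + swapVars w).totalDegree ≤ n)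
    (hedge : ∀ i ∈ s, eval ![1, v i] w = 0 ∧ eval ![-1, v i] w = 0 ∧
      eval ![v i, 1] w = 0 ∧ eval ![v i, -1] w = 0) :
    bubble ∣ w := by
  obtain ⟨hB, hC, hA, hB'⟩ :=
    coeff_eq_zero_of_vanishing_on_edges hvs hs hv hn hodd hv₁ hw hsym hedge
  have hσ : (swapVars w).totalDegree ≤ n + 1 := (totalDegree_swapVars_le w).trans hw
  have hA' := coeff_swapVars_eq_neg hsym (d := single 1 (n + 1)) (by simp)
  have hC' := coeff_swapVars_eq_neg hsym (d := single 0 1 + single 1 n) (by simp [add_comm])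
  apply bubble_dvd_of_traceFst_eq_zero
  · rw [traceFst_eq_nodal_mul hvs hs hv hn hw fun i hi => (hedge i hi).1, hA, hB, hC]
    simp
  · rw [traceFst_eq_nodal_mul hvs hs hv hn hw fun i hi => (hedge i hi).2.1, hA, hB, hC]
    simp
  · rw [traceFst_eq_nodal_mul hvs hs hv hn hσ fun i hi => by
      rw [eval_swapVars]; exact (hedge i hi).2.2.1]
    rw [hA', hB', hC', hA, hC]
    simp
  · rw [traceFst_eq_nodal_mul hvs hs hv hn hσ fun i hi => by
      rw [eval_swapVars]; exact (hedge i hi).2.2.2]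
    rw [hA', hB', hC', hA, hC]
    simp

end Edges

theorem stmt_4_general (k : ℕ) (g : ℤ → ℝ)
    (hmem : ∀ i ∈ Finset.Icc (-(k : ℤ)) (k : ℤ), g i ∈ Set.Ioo (-1 : ℝ) 1)
    (hinj : Set.InjOn g (Finset.Icc (-(k : ℤ)) (k : ℤ)))
    (hsym : ∀ i ∈ Finset.Icc (-(k : ℤ)) (k : ℤ), g (-i) = -g i)
    (I : Finset (ℝ × ℝ))
    (hI : ∀ r ∈ I, r.1 ∈ Set.Ioo (-1 : ℝ) 1 ∧ r.2 ∈ Set.Ioo (-1 : ℝ) 1)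
    (hunisolv : ∀ q : MvPolynomial (Fin 2) ℝ,
      (∀ d ∈ q.support, ((d 0 + d 1 : ℕ) : ℤ) ≤ 2 * (k : ℤ) - 3) →
      (∀ r ∈ I, MvPolynomial.eval ![r.1, r.2] q = 0) → q = 0)
    -- v ∈ ER_m(K̂) with m = 2k+1
    (v p : MvPolynomial (Fin 2) ℝ) (c₃ c₄ : ℝ)
    (hp : p.totalDegree ≤ 2 * k + 1)
    (hv : v = p + MvPolynomial.C c₃ *
        (MvPolynomial.X 0 ^ (2 * k + 1) * MvPolynomial.X 1 -
          MvPolynomial.X 0 * MvPolynomial.X 1 ^ (2 * k + 1)) +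
      MvPolynomial.C c₄ *
        (MvPolynomial.X 0 ^ (2 * k + 2) - MvPolynomial.X 1 ^ (2 * k + 2)))
    -- v vanishes at every point of G
    (hG : ∀ i ∈ Finset.Icc (-(k : ℤ)) (k : ℤ),
      MvPolynomial.eval ![1, g i] v = 0 ∧ MvPolynomial.eval ![-1, g i] v = 0 ∧
      MvPolynomial.eval ![g i, 1] v = 0 ∧ MvPolynomial.eval ![g i, -1] v = 0)
    -- v vanishes at every point of I
    (hIv : ∀ r ∈ I, MvPolynomial.eval ![r.1, r.2] v = 0) :
    v = 0 := by
  have hS : ∀ i ∈ Finset.Icc (-(k : ℤ)) k, -i ∈ Finset.Icc (-(k : ℤ)) k := fun i hi => by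
    rw [Finset.mem_Icc] at hi ⊢; omega
  have hcard : (Finset.Icc (-(k : ℤ)) k).card = 2 * k + 1 := by rw [Int.card_Icc]; omega
  have hg₁ : ∀ i ∈ Finset.Icc (-(k : ℤ)) k, g i ≠ 1 := fun i hi => (hmem i hi).2.ne
  have hvp : v = p + enrichment (2 * k + 1) c₃ c₄ := by rw [hv, enrichment, add_assoc]
  have hdeg : v.totalDegree ≤ 2 * k + 1 + 1 := by
    rw [hvp]
    exact (totalDegree_add _ _).trans
      (max_le (by omega) (isHomogeneous_enrichment _ _ _).totalDegree_le)
  have hdeg_sym : (v + swapVars v).totalDegree ≤ 2 * k + 1 := by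
    rw [show v + swapVars v = p + swapVars p by rw [hvp, map_add, swapVars_enrichment]; ring]
    exact (totalDegree_add _ _).trans (max_le hp ((totalDegree_swapVars_le p).trans hp))
  obtain ⟨-, hC, hA, -⟩ :=
    coeff_eq_zero_of_vanishing_on_edges hinj hS hsym hcard ⟨k, rfl⟩ hg₁ hdeg hdeg_sym hG
  have htop (d : Fin 2 →₀ ℕ) (hd : d 0 + d 1 = 2 * k + 1 + 1) :
      coeff d (enrichment (2 * k + 1) c₃ c₄) = coeff d v := by
    rw [hvp, coeff_add, coeff_eq_zero_of_totalDegree_lt_fin_two (w := p) (by omega), zero_add]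
  have hT : enrichment (2 * k + 1) c₃ c₄ = 0 := enrichment_eq_zero_of_coeff
    (by rw [htop _ (by simp), hA]) (by rw [htop _ (by simp; ring), hC])
  rw [hT, add_zero] at hvp
  obtain ⟨q, hq⟩ :=
    bubble_dvd_of_vanishing_on_edges hinj hS hsym hcard ⟨k, rfl⟩ hg₁ hdeg hdeg_sym hG
  exact eq_zero_of_eq_bubble_mul hq (by rw [hvp]; omega) hI hunisolv hIv

theorem stmt_4 (k : ℕ) (g : ℤ → ℝ)
    (hzero : ∀ i ∈ Finset.Icc (-(k : ℤ)) (k : ℤ),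
      (legendreP (2 * k + 1)).eval (g i) = 0)
    (hmem : ∀ i ∈ Finset.Icc (-(k : ℤ)) (k : ℤ), g i ∈ Set.Ioo (-1 : ℝ) 1)
    (hinj : Set.InjOn g (Finset.Icc (-(k : ℤ)) (k : ℤ)))
    (hsym : ∀ i ∈ Finset.Icc (-(k : ℤ)) (k : ℤ), g (-i) = -g i)
    (I : Finset (ℝ × ℝ))
    (hI : ∀ r ∈ I, r.1 ∈ Set.Ioo (-1 : ℝ) 1 ∧ r.2 ∈ Set.Ioo (-1 : ℝ) 1)
    (hunisolv : ∀ q : MvPolynomial (Fin 2) ℝ,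
      (∀ d ∈ q.support, ((d 0 + d 1 : ℕ) : ℤ) ≤ 2 * (k : ℤ) - 3) →
      (∀ r ∈ I, MvPolynomial.eval ![r.1, r.2] q = 0) → q = 0)
    -- v ∈ ER_m(K̂) with m = 2k+1
    (v p : MvPolynomial (Fin 2) ℝ) (c₃ c₄ : ℝ)
    (hp : p.totalDegree ≤ 2 * k + 1)
    (hv : v = p + MvPolynomial.C c₃ *
        (MvPolynomial.X 0 ^ (2 * k + 1) * MvPolynomial.X 1 -
          MvPolynomial.X 0 * MvPolynomial.X 1 ^ (2 * k + 1)) +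
      MvPolynomial.C c₄ *
        (MvPolynomial.X 0 ^ (2 * k + 2) - MvPolynomial.X 1 ^ (2 * k + 2)))
    -- v vanishes at every point of G
    (hG : ∀ i ∈ Finset.Icc (-(k : ℤ)) (k : ℤ),
      MvPolynomial.eval ![1, g i] v = 0 ∧ MvPolynomial.eval ![-1, g i] v = 0 ∧
      MvPolynomial.eval ![g i, 1] v = 0 ∧ MvPolynomial.eval ![g i, -1] v = 0)
    -- v vanishes at every point of I
    (hIv : ∀ r ∈ I, MvPolynomial.eval ![r.1, r.2] v = 0) :
    v = 0 :=
  stmt_4_general k g hmem hinj hsym I hI hunisolv v p c₃ c₄ hp hv hG hIv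
end

section
/- Let k ≥ 0, m = 2k+1, and let I be a finite subset of the open square (−1,1)² such that the only polynomial of total degree ≤ 2k−3 vanishing at every point of I is the zero polynomial. Suppose v ∈ ER_m(K̂) satisfies ∫_{−1}^{1} v(1,t) t^j dt = ∫_{−1}^{1} v(−1,t) t^j dt = ∫_{−1}^{1} v(t,1) t^j dt = ∫_{−1}^{1} v(t,−1) t^j dt = 0 for every j = 0, 1, …, 2k (i.e. all moments of order ≤ 2k of v on each of the four edges of K̂ vanish), and that v vanishes at every point of I. Then v is the zero polynomial. -/
/-!
On each edge of the square the trace of `v` is a polynomial of degree `≤ 2k + 2` whose moments of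
order `≤ 2k` on `[-1, 1]` vanish. Such a polynomial is zero as soon as it vanishes at `±1` (it is
then `(t² - 1) g` with `∫ (t² - 1) g² = 0`), and it is odd as soon as its degree is `≤ 2k + 1`
(then `f(t) + f(-t)` has degree `≤ 2k`, hence is zero). The sum of the traces on two adjacent edges
has degree `≤ 2k + 1`, because the contributions of `x^(m+1) - y^(m+1)` cancel. In the alternating
sum of the four traces those of `x^m y - x y^m` cancel too, and the `t^m`-coefficient of `p(c, t)`
does not depend on `c`, so this sum has degree `≤ 2k` and is zero. Evaluated at `±1`, these
relations force the four corner values of `v` to vanish, so all four traces vanish. Then both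
enrichment coefficients vanish, `v ∈ P_m` is divisible by `(x² - 1)(y² - 1)`, and the quotient has
degree `≤ 2k - 3` and vanishes on `I`, so it is zero.
-/

open Set

namespace EnrichedSquare

section Moments

open Polynomial

def vanishingMoments (n : ℕ) : Submodule ℝ ℝ[X] where
  carrier := {f | ∀ j ≤ n, ∫ t in (-1 : ℝ)..1, f.eval t * t ^ j = 0}
  add_mem' {f g} hf hg j hj := by
    simp only [eval_add, add_mul]
    rw [intervalIntegral.integral_add ((by fun_prop : Continuous _).intervalIntegrable _ _)
      ((by fun_prop : Continuous _).intervalIntegrable _ _), hf j hj, hg j hj, add_zero]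
  zero_mem' j _ := by simp
  smul_mem' c f hf j hj := by
    simp only [eval_smul, smul_eq_mul, mul_assoc, intervalIntegral.integral_const_mul,
      hf j hj, mul_zero]

variable {n : ℕ} {f g : ℝ[X]}

lemma integral_mul_eq_zero_of_mem_vanishingMoments (hf : f ∈ vanishingMoments n)
    (hg : g.natDegree ≤ n) : ∫ t in (-1 : ℝ)..1, f.eval t * g.eval t = 0 := by
  simp_rw [eval_eq_sum_range' (Nat.lt_succ_of_le hg), Finset.mul_sum]
  rw [intervalIntegral.integral_finsetSum fun j _ =>
    (by fun_prop : Continuous _).intervalIntegrable _ _]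
  refine Finset.sum_eq_zero fun j hj => ?_
  simp_rw [mul_left_comm (f.eval _), intervalIntegral.integral_const_mul,
    hf j (Nat.lt_succ_iff.mp (Finset.mem_range.mp hj)), mul_zero]

lemma integral_eval_pos {a b : ℝ} (hab : a < b) {h : ℝ[X]} (h0 : h ≠ 0)
    (hnn : ∀ t ∈ Icc a b, 0 ≤ h.eval t) : 0 < ∫ t in a..b, h.eval t := by
  obtain ⟨c, hc, hhc⟩ : ∃ c ∈ Icc a b, h.eval c ≠ 0 := by
    by_contra! hall
    exact h0 (h.eq_zero_of_infinite_isRoot ((Icc_infinite hab).mono hall))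
  exact intervalIntegral.integral_pos hab h.continuousOn
    (fun t ht => hnn t (Ioc_subset_Icc_self ht)) ⟨c, hc, (hnn c hc).lt_of_ne' hhc⟩

lemma eq_zero_of_mem_vanishingMoments (hf : f ∈ vanishingMoments n) (hdeg : f.natDegree ≤ n) :
    f = 0 := by
  by_contra hf0
  have hpos := integral_eval_pos (by norm_num : (-1 : ℝ) < 1) (mul_ne_zero hf0 hf0) fun t _ => by
    simpa only [eval_mul] using mul_self_nonneg (f.eval t)
  simp only [eval_mul, integral_mul_eq_zero_of_mem_vanishingMoments hf hdeg] at hpos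
  exact hpos.false

lemma comp_neg_X_mem_vanishingMoments (hf : f ∈ vanishingMoments n) :
    f.comp (-X) ∈ vanishingMoments n := by
  intro j hj
  have h := intervalIntegral.integral_comp_neg (a := (-1 : ℝ)) (b := 1)
    fun s => f.eval s * s ^ j
  simp only [neg_neg, hf j hj] at h
  calc ∫ t in (-1 : ℝ)..1, (f.comp (-X)).eval t * t ^ j
      = ∫ t in (-1 : ℝ)..1, (-1) ^ j * (f.eval (-t) * (-t) ^ j) := by
        refine intervalIntegral.integral_congr fun t _ => ?_
        simp only [eval_comp, eval_neg, eval_X, neg_pow t, ← mul_assoc, mul_comm _ (f.eval _)]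
        have h1 : ((-1 : ℝ) ^ j) * (-1) ^ j = 1 := by rw [← mul_pow]; norm_num
        linear_combination (-(f.eval (-t) * t ^ j)) * h1
    _ = 0 := by rw [intervalIntegral.integral_const_mul, h, mul_zero]

lemma coeff_comp_neg_X {R : Type*} [CommRing R] (p : R[X]) (i : ℕ) :
    (p.comp (-X)).coeff i = (-1) ^ i * p.coeff i := by
  rw [← neg_one_mul (X : R[X]), ← C_1, ← C_neg, comp_C_mul_X_coeff, mul_comm]

lemma eval_neg_one_eq_neg_eval_one (hn : Even n) (hf : f ∈ vanishingMoments n)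
    (hdeg : f.natDegree ≤ n + 1) : f.eval (-1) = -f.eval 1 := by
  have hsym : f + f.comp (-X) = 0 := by
    refine eq_zero_of_mem_vanishingMoments
      (add_mem hf (comp_neg_X_mem_vanishingMoments hf)) ?_
    have hdeg' : (f.comp (-X)).natDegree ≤ n + 1 := by
      rwa [natDegree_comp, natDegree_neg, natDegree_X, mul_one]
    rw [natDegree_le_iff_coeff_eq_zero]
    intro i hi
    rcases (Nat.succ_le_of_lt hi).eq_or_lt with rfl | hi
    · rw [coeff_add, coeff_comp_neg_X, Nat.succ_eq_add_one, (hn.add_one).neg_one_pow]; ring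
    · rw [coeff_add, coeff_eq_zero_of_natDegree_lt (hdeg.trans_lt hi),
        coeff_eq_zero_of_natDegree_lt (hdeg'.trans_lt hi), add_zero]
  simpa [eq_neg_iff_add_eq_zero, add_comm] using congrArg (eval 1) hsym

lemma eq_zero_of_eval_one_of_eval_neg_one (hf : f ∈ vanishingMoments n)
    (hdeg : f.natDegree ≤ n + 2) (h1 : f.eval 1 = 0) (hm1 : f.eval (-1) = 0) : f = 0 := by
  -- `f = (X² - 1) g` with `deg g ≤ n`, and `0 = ∫ f g = -∫ (1 - t²) g² < 0` unless `g = 0`.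
  obtain ⟨g, rfl⟩ : X ^ 2 - C 1 ∣ f := by
    have hcop : IsCoprime (X - C (1 : ℝ)) (X - C (-1)) :=
      isCoprime_X_sub_C_of_isUnit_sub (by norm_num)
    convert hcop.mul_dvd (dvd_iff_isRoot.mpr h1) (dvd_iff_isRoot.mpr hm1) using 1
    simp only [map_neg, C_1]; ring
  by_contra hf0
  have hg0 : g ≠ 0 := right_ne_zero_of_mul hf0
  have hgdeg : g.natDegree ≤ n := by
    rw [natDegree_mul (X_pow_sub_C_ne_zero two_pos 1) hg0, natDegree_X_pow_sub_C] at hdeg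
    omega
  have hnn : ∀ t ∈ Icc (-1 : ℝ) 1, 0 ≤ (-((X ^ 2 - C 1) * g * g)).eval t := fun t ht => by
    have : 0 ≤ 1 - t ^ 2 := by nlinarith [ht.1, ht.2]
    simpa [mul_assoc, ← neg_mul] using mul_nonneg this (mul_self_nonneg (g.eval t))
  have hpos := integral_eval_pos (by norm_num) (neg_ne_zero.mpr (mul_ne_zero hf0 hg0)) hnn
  have hzero := integral_mul_eq_zero_of_mem_vanishingMoments hf hgdeg
  simp only [eval_neg, intervalIntegral.integral_neg, eval_mul] at hpos hzero
  linarith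

/-- `f₁, f₂, f₃, f₄` stand for the traces on the edges `x = 1`, `x = -1`, `y = 1`, `y = -1`; the
last four hypotheses say that they agree at the corners. -/
lemma eq_zero_of_corners (hn : Even n) {f₁ f₂ f₃ f₄ : ℝ[X]}
    (hf₁ : f₁ ∈ vanishingMoments n) (hf₂ : f₂ ∈ vanishingMoments n)
    (hf₃ : f₃ ∈ vanishingMoments n) (hf₄ : f₄ ∈ vanishingMoments n)
    (hdeg₁ : f₁.natDegree ≤ n + 2) (hdeg₂ : f₂.natDegree ≤ n + 2)
    (hdeg₃ : f₃.natDegree ≤ n + 2) (hdeg₄ : f₄.natDegree ≤ n + 2)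
    (hdeg₁₃ : (f₁ + f₃).natDegree ≤ n + 1)
    (hdeg₁₄ : (f₁ + f₄).natDegree ≤ n + 1)
    (hdeg : (f₁ - f₂ + f₃ - f₄).natDegree ≤ n)
    (h₁₃ : f₁.eval 1 = f₃.eval 1) (h₁₄ : f₁.eval (-1) = f₄.eval 1)
    (h₂₃ : f₂.eval 1 = f₃.eval (-1)) (h₂₄ : f₂.eval (-1) = f₄.eval (-1)) :
    f₁ = 0 ∧ f₂ = 0 ∧ f₃ = 0 ∧ f₄ = 0 := by
  have hodd₁₃ := eval_neg_one_eq_neg_eval_one hn (add_mem hf₁ hf₃) hdeg₁₃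
  have hodd₁₄ := eval_neg_one_eq_neg_eval_one hn (add_mem hf₁ hf₄) hdeg₁₄
  have hzero := eq_zero_of_mem_vanishingMoments
    (sub_mem (add_mem (sub_mem hf₁ hf₂) hf₃) hf₄) hdeg
  have hzero₁ := congrArg (eval 1) hzero
  have hzero' := congrArg (eval (-1)) hzero
  simp only [eval_add, eval_sub, eval_zero] at hodd₁₃ hodd₁₄ hzero₁ hzero'
  refine ⟨eq_zero_of_eval_one_of_eval_neg_one hf₁ hdeg₁ ?_ ?_,
    eq_zero_of_eval_one_of_eval_neg_one hf₂ hdeg₂ ?_ ?_,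
    eq_zero_of_eval_one_of_eval_neg_one hf₃ hdeg₃ ?_ ?_,
    eq_zero_of_eval_one_of_eval_neg_one hf₄ hdeg₄ ?_ ?_⟩ <;> linarith

end Moments

section Divisibility

open MvPolynomial

variable {σ R : Type*} [CommRing R]

noncomputable def substConst [DecidableEq σ] (i : σ) (c : R) :
    MvPolynomial σ R →ₐ[R] MvPolynomial σ R :=
  aeval (Function.update X i (C c))

lemma eval_substConst [DecidableEq σ] (i : σ) (c : R) (p : MvPolynomial σ R) (x : σ → R) :
    eval x (substConst i c p) = eval (Function.update x i c) p := by
  rw [substConst, aeval_def, eval_eval₂]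
  congr 1
  · ext; simp
  · funext j; by_cases hj : j = i <;> simp [hj]

lemma X_sub_C_dvd_sub_substConst [DecidableEq σ] (i : σ) (c : R) (p : MvPolynomial σ R) :
    X i - C c ∣ p - substConst i c p := by
  -- `φ p` is `p` viewed as a polynomial in `X i`, so `a - b ∣ (φ p)(a) - (φ p)(b)` applies.
  set φ : MvPolynomial σ R →ₐ[R] Polynomial (MvPolynomial σ R) :=
    aeval fun j => if j = i then Polynomial.X else Polynomial.C (X j)
  have heval : ∀ a, (φ p).eval a = aeval (Function.update X i a) p := by
    intro a
    rw [aeval_def, polynomial_eval_eval₂, aeval_def]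
    congr 1
    · ext; simp
    · funext j; by_cases hj : j = i <;> simp [hj]
  simpa [substConst, heval, aeval_X_left_apply] using
    Polynomial.sub_dvd_eval_sub (X i) (C c) (φ p)

lemma X_sub_C_ne_zero [Nontrivial R] (i : σ) (c : R) : (X i - C c : MvPolynomial σ R) ≠ 0 :=
  fun h => by simpa using congrArg (eval fun _ => c + 1) h

variable [IsDomain R]

lemma substConst_X_sub_C_ne_zero [DecidableEq σ] {a b : σ × R} (hab : b ≠ a) :
    substConst a.1 a.2 (X b.1 - C b.2) ≠ 0 := by
  rw [substConst, map_sub, aeval_X, aeval_C, algebraMap_eq]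
  by_cases h₁ : b.1 = a.1
  · have h₂ : a.2 - b.2 ≠ 0 := sub_ne_zero.mpr fun h₂ => hab (Prod.ext h₁ h₂.symm)
    rwa [h₁, Function.update_self, ← map_sub, Ne, C_eq_zero]
  · rw [Function.update_of_ne h₁]
    exact X_sub_C_ne_zero b.1 b.2

lemma prod_X_sub_C_ne_zero (s : Finset (σ × R)) : ∏ a ∈ s, (X a.1 - C a.2) ≠ 0 :=
  Finset.prod_ne_zero_iff.mpr fun a _ => X_sub_C_ne_zero a.1 a.2

lemma prod_X_sub_C_dvd [Infinite R] (s : Finset (σ × R)) {p : MvPolynomial σ R}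
    (h : ∀ a ∈ s, ∀ x : σ → R, x a.1 = a.2 → eval x p = 0) :
    ∏ a ∈ s, (X a.1 - C a.2) ∣ p := by
  classical
  induction s using Finset.induction_on with
  | empty => simp
  | insert a s ha ih =>
    obtain ⟨w, rfl⟩ := ih fun b hb => h b (Finset.mem_insert_of_mem hb)
    have hsubst : substConst a.1 a.2 (∏ b ∈ s, (X b.1 - C b.2)) * substConst a.1 a.2 w = 0 := by
      rw [← map_mul]
      refine funext fun x => ?_
      rw [eval_substConst, map_zero]
      exact h a (Finset.mem_insert_self a s) _ (by simp)
    have hprod : substConst a.1 a.2 (∏ b ∈ s, (X b.1 - C b.2)) ≠ 0 := by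
      rw [map_prod, Finset.prod_ne_zero_iff]
      exact fun b hb => substConst_X_sub_C_ne_zero fun hab => ha (hab ▸ hb)
    have hw : substConst a.1 a.2 w = 0 := (mul_eq_zero.mp hsubst).resolve_left hprod
    rw [Finset.prod_insert ha, mul_comm (X a.1 - _)]
    exact mul_dvd_mul_left _ (by simpa [hw] using X_sub_C_dvd_sub_substConst a.1 a.2 w)

lemma totalDegree_prod_X_sub_C (s : Finset (σ × R)) :
    (∏ a ∈ s, (X a.1 - C a.2)).totalDegree = s.card := by
  classical
  induction s using Finset.induction_on with
  | empty => simp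
  | insert a s ha ih =>
    rw [Finset.prod_insert ha, totalDegree_mul_of_isDomain (X_sub_C_ne_zero _ _)
      (prod_X_sub_C_ne_zero s), ih, Finset.card_insert_of_notMem ha, sub_eq_add_neg, ← map_neg,
      totalDegree_add_eq_left_of_totalDegree_lt] <;>
      simp [totalDegree_X, add_comm]

end Divisibility

section Traces

open Polynomial

/-- The traces on the edges `y = c` are those of `rename (Equiv.swap 0 1) q`. -/
noncomputable def edgeTrace (c : ℝ) : MvPolynomial (Fin 2) ℝ →ₐ[ℝ] ℝ[X] :=
  MvPolynomial.aeval ![C c, X]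

lemma eval_edgeTrace (c t : ℝ) (q : MvPolynomial (Fin 2) ℝ) :
    (edgeTrace c q).eval t = MvPolynomial.eval ![c, t] q := by
  rw [edgeTrace, MvPolynomial.aeval_def, MvPolynomial.polynomial_eval_eval₂]
  congr 1
  · ext; simp
  · ext i; fin_cases i <;> simp

lemma edgeTrace_eq_sum (c : ℝ) (q : MvPolynomial (Fin 2) ℝ) :
    edgeTrace c q = ∑ d ∈ q.support, C (q.coeff d * c ^ d 0) * X ^ d 1 := by
  rw [edgeTrace, MvPolynomial.aeval_def, MvPolynomial.eval₂_eq']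
  refine Finset.sum_congr rfl fun d _ => ?_
  simp [Fin.prod_univ_two, mul_assoc]

lemma add_le_totalDegree {q : MvPolynomial (Fin 2) ℝ} {d : Fin 2 →₀ ℕ}
    (hd : d ∈ q.support) :
    d 0 + d 1 ≤ q.totalDegree := by
  simpa [Finsupp.sum_fintype, Fin.sum_univ_two] using MvPolynomial.le_totalDegree hd

lemma natDegree_edgeTrace_le {q : MvPolynomial (Fin 2) ℝ} {n : ℕ} (hq : q.totalDegree ≤ n)
    (c : ℝ) : (edgeTrace c q).natDegree ≤ n := by
  rw [edgeTrace_eq_sum]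
  refine natDegree_sum_le_of_forall_le _ _ fun d hd => (natDegree_C_mul_X_pow_le _ _).trans ?_
  have := add_le_totalDegree hd
  omega

lemma natDegree_edgeTrace_sub_le {q : MvPolynomial (Fin 2) ℝ} {n : ℕ}
    (hq : q.totalDegree ≤ n + 1) (c c' : ℝ) :
    (edgeTrace c q - edgeTrace c' q).natDegree ≤ n := by
  rw [edgeTrace_eq_sum, edgeTrace_eq_sum, ← Finset.sum_sub_distrib]
  refine natDegree_sum_le_of_forall_le _ _ fun d hd => ?_
  rw [← sub_mul, ← C_sub, ← mul_sub]
  by_cases hd0 : d 0 = 0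
  · simp [hd0]
  · have := add_le_totalDegree hd
    exact (natDegree_C_mul_X_pow_le _ _).trans (by omega)

/-- `ER_m(K̂) = P_m + span {enrichMixed k, enrichPower k}` for `m = 2k + 1`. -/
noncomputable def enrichMixed (k : ℕ) : MvPolynomial (Fin 2) ℝ :=
  MvPolynomial.X 0 ^ (2 * k + 1) * MvPolynomial.X 1 -
    MvPolynomial.X 0 * MvPolynomial.X 1 ^ (2 * k + 1)

noncomputable def enrichPower (k : ℕ) : MvPolynomial (Fin 2) ℝ :=
  MvPolynomial.X 0 ^ (2 * k + 2) - MvPolynomial.X 1 ^ (2 * k + 2)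

lemma edgeTrace_enrich (k : ℕ) (p : MvPolynomial (Fin 2) ℝ) (a b : ℝ) {c : ℝ}
    (hc : c ^ 2 = 1) :
    edgeTrace c (p + MvPolynomial.C a * enrichMixed k + MvPolynomial.C b * enrichPower k) =
      edgeTrace c p + C (c * a) * (X - X ^ (2 * k + 1)) + C b * (1 - X ^ (2 * k + 2)) := by
  have hodd : c ^ (2 * k + 1) = c := by rw [pow_succ, pow_mul, hc, one_pow, one_mul]
  have heven : c ^ (2 * k + 2) = 1 := by
    rw [show 2 * k + 2 = 2 * (k + 1) by ring, pow_mul, hc, one_pow]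
  simp only [edgeTrace, enrichMixed, enrichPower, map_add, map_mul, map_sub, map_pow,
    MvPolynomial.algHom_C, algebraMap_eq, MvPolynomial.aeval_X, Matrix.cons_val_zero,
    Matrix.cons_val_one, Matrix.cons_val_fin_one, ← C_pow, hodd, heven, map_one]
  ring

lemma rename_swap_enrich (k : ℕ) (p : MvPolynomial (Fin 2) ℝ) (a b : ℝ) :
    MvPolynomial.rename (Equiv.swap 0 1)
        (p + MvPolynomial.C a * enrichMixed k + MvPolynomial.C b * enrichPower k) =
      MvPolynomial.rename (Equiv.swap 0 1) p + MvPolynomial.C (-a) * enrichMixed k +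
        MvPolynomial.C (-b) * enrichPower k := by
  simp only [enrichMixed, enrichPower, map_add, map_mul, map_sub, map_pow, MvPolynomial.algHom_C,
    MvPolynomial.algebraMap_eq, MvPolynomial.rename_X, Equiv.swap_apply_left,
    Equiv.swap_apply_right, MvPolynomial.C_neg]
  ring

lemma eval_rename_swap (x y : ℝ) (q : MvPolynomial (Fin 2) ℝ) :
    MvPolynomial.eval ![x, y] (MvPolynomial.rename (Equiv.swap 0 1) q) =
      MvPolynomial.eval ![y, x] q := by
  rw [MvPolynomial.eval_rename]
  congr 2
  funext i; fin_cases i <;> rfl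

lemma edgeTrace_mem_vanishingMoments {n : ℕ} {c : ℝ} {q : MvPolynomial (Fin 2) ℝ}
    (h : ∀ j ≤ n, ∫ t in (-1 : ℝ)..1, MvPolynomial.eval ![c, t] q * t ^ j = 0) :
    edgeTrace c q ∈ vanishingMoments n := fun j hj => by
  simpa only [eval_edgeTrace] using h j hj

lemma edgeTrace_rename_swap_mem_vanishingMoments {n : ℕ} {c : ℝ} {q : MvPolynomial (Fin 2) ℝ}
    (h : ∀ j ≤ n, ∫ t in (-1 : ℝ)..1, MvPolynomial.eval ![t, c] q * t ^ j = 0) :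
    edgeTrace c (MvPolynomial.rename (Equiv.swap 0 1) q) ∈ vanishingMoments n := fun j hj => by
  simpa only [eval_edgeTrace, eval_rename_swap] using h j hj

lemma edgeTraces_eq_zero {k : ℕ} {v p : MvPolynomial (Fin 2) ℝ} {a b : ℝ}
    (hp : p.totalDegree ≤ 2 * k + 1)
    (hv : v = p + MvPolynomial.C a * enrichMixed k + MvPolynomial.C b * enrichPower k)
    (h₁ : edgeTrace 1 v ∈ vanishingMoments (2 * k))
    (h₂ : edgeTrace (-1) v ∈ vanishingMoments (2 * k))
    (h₃ : edgeTrace 1 (MvPolynomial.rename (Equiv.swap 0 1) v) ∈ vanishingMoments (2 * k))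
    (h₄ : edgeTrace (-1) (MvPolynomial.rename (Equiv.swap 0 1) v) ∈ vanishingMoments (2 * k)) :
    edgeTrace 1 v = 0 ∧ edgeTrace (-1) v = 0 ∧
      edgeTrace 1 (MvPolynomial.rename (Equiv.swap 0 1) v) = 0 ∧
      edgeTrace (-1) (MvPolynomial.rename (Equiv.swap 0 1) v) = 0 := by
  set u := MvPolynomial.rename (Equiv.swap 0 1) v
  set p' := MvPolynomial.rename (Equiv.swap 0 1) p
  have hp' : p'.totalDegree ≤ 2 * k + 1 := (MvPolynomial.totalDegree_rename_le _ _).trans hp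
  have hu : u = p' + MvPolynomial.C (-a) * enrichMixed k + MvPolynomial.C (-b) * enrichPower k := by
    rw [← rename_swap_enrich, ← hv]
  have := natDegree_edgeTrace_le hp 1
  have := natDegree_edgeTrace_le hp (-1)
  have := natDegree_edgeTrace_le hp' 1
  have := natDegree_edgeTrace_le hp' (-1)
  have e₁ : edgeTrace 1 v =
      edgeTrace 1 p + C a * (X - X ^ (2 * k + 1)) + C b * (1 - X ^ (2 * k + 2)) := by
    rw [hv, edgeTrace_enrich k p a b (by norm_num), one_mul]
  have e₂ : edgeTrace (-1) v =
      edgeTrace (-1) p - C a * (X - X ^ (2 * k + 1)) + C b * (1 - X ^ (2 * k + 2)) := by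
    rw [hv, edgeTrace_enrich k p a b (by norm_num), neg_one_mul, map_neg]; ring
  have e₃ : edgeTrace 1 u =
      edgeTrace 1 p' - C a * (X - X ^ (2 * k + 1)) - C b * (1 - X ^ (2 * k + 2)) := by
    rw [hu, edgeTrace_enrich k p' _ _ (by norm_num), one_mul, map_neg, map_neg]; ring
  have e₄ : edgeTrace (-1) u =
      edgeTrace (-1) p' + C a * (X - X ^ (2 * k + 1)) - C b * (1 - X ^ (2 * k + 2)) := by
    rw [hu, edgeTrace_enrich k p' _ _ (by norm_num), neg_one_mul, neg_neg, map_neg]; ring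
  refine eq_zero_of_corners (even_two_mul k) h₁ h₂ h₃ h₄ ?_ ?_ ?_ ?_ ?_ ?_ ?_ ?_ ?_ ?_ ?_
  · rw [e₁]; compute_degree; omega
  · rw [e₂]; compute_degree; omega
  · rw [e₃]; compute_degree; omega
  · rw [e₄]; compute_degree; omega
  · rw [show edgeTrace 1 v + edgeTrace 1 u = edgeTrace 1 p + edgeTrace 1 p' by
      rw [e₁, e₃]; ring]
    compute_degree; omega
  · rw [show edgeTrace 1 v + edgeTrace (-1) u =
        edgeTrace 1 p + edgeTrace (-1) p' + C (2 * a) * (X - X ^ (2 * k + 1)) by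
      rw [e₁, e₄, map_mul, map_ofNat]; ring]
    compute_degree; omega
  · rw [show edgeTrace 1 v - edgeTrace (-1) v + edgeTrace 1 u - edgeTrace (-1) u =
        (edgeTrace 1 p - edgeTrace (-1) p) + (edgeTrace 1 p' - edgeTrace (-1) p') by
      rw [e₁, e₂, e₃, e₄]; ring]
    exact natDegree_add_le_of_degree_le (natDegree_edgeTrace_sub_le hp 1 (-1))
      (natDegree_edgeTrace_sub_le hp' 1 (-1))
  all_goals simp only [u, eval_edgeTrace, eval_rename_swap]

lemma eq_of_edgeTrace_eq_zero {k : ℕ} {v p : MvPolynomial (Fin 2) ℝ} {a b : ℝ}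
    (hp : p.totalDegree ≤ 2 * k + 1)
    (hv : v = p + MvPolynomial.C a * enrichMixed k + MvPolynomial.C b * enrichPower k)
    (h₁ : edgeTrace 1 v = 0) (h₂ : edgeTrace (-1) v = 0) : v = p := by
  rw [hv, edgeTrace_enrich k p a b (by norm_num)] at h₁ h₂
  -- The `t ^ (2k + 2)` coefficient of the trace on `x = 1` is `-b`; the `t ^ (2k + 1)`
  -- coefficients on `x = 1` and `x = -1` differ by `2 a` when `k > 0`.
  have hb : b = 0 := by
    have h := congrArg (coeff · (2 * k + 2)) h₁
    have hP := coeff_eq_zero_of_natDegree_lt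
      ((natDegree_edgeTrace_le hp 1).trans_lt (by omega : 2 * k + 1 < 2 * k + 2))
    simpa [hP, coeff_X, coeff_one] using h
  have ha : a * (X - X ^ (2 * k + 1) : ℝ[X]).coeff (2 * k + 1) = 0 := by
    have h := congrArg (coeff · (2 * k + 1)) (congrArg₂ (· - ·) h₁ h₂)
    have hP := coeff_eq_zero_of_natDegree_lt
      ((natDegree_edgeTrace_sub_le hp 1 (-1)).trans_lt (by omega : 2 * k < 2 * k + 1))
    simp only [coeff_sub, coeff_add, coeff_C_mul, coeff_zero] at h hP ⊢
    linarith
  rw [hv, hb, map_zero, zero_mul, add_zero]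
  rcases k with _ | k
  · simp [enrichMixed]
  · have : a = 0 := by simpa [coeff_X] using ha
    rw [this, map_zero, zero_mul, add_zero]

/-- The pair `(i, c)` stands for the line `x_i = c`. -/
noncomputable def squareEdges : Finset (Fin 2 × ℝ) := {(0, 1), (0, -1), (1, 1), (1, -1)}

lemma card_squareEdges : squareEdges.card = 4 := by
  norm_num [squareEdges]

lemma prod_squareEdges_dvd {v : MvPolynomial (Fin 2) ℝ}
    (h₁ : edgeTrace 1 v = 0) (h₂ : edgeTrace (-1) v = 0)
    (h₃ : edgeTrace 1 (MvPolynomial.rename (Equiv.swap 0 1) v) = 0)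
    (h₄ : edgeTrace (-1) (MvPolynomial.rename (Equiv.swap 0 1) v) = 0) :
    ∏ a ∈ squareEdges, (MvPolynomial.X a.1 - MvPolynomial.C a.2) ∣ v := by
  refine prod_X_sub_C_dvd _ fun a ha x hx => ?_
  have hx' : x = ![x 0, x 1] := by ext i; fin_cases i <;> rfl
  simp only [squareEdges, Finset.mem_insert, Finset.mem_singleton] at ha
  rcases ha with rfl | rfl | rfl | rfl <;> dsimp only at hx <;> rw [hx', hx]
  · rw [← eval_edgeTrace, h₁, eval_zero]
  · rw [← eval_edgeTrace, h₂, eval_zero]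
  · rw [← eval_rename_swap, ← eval_edgeTrace, h₃, eval_zero]
  · rw [← eval_rename_swap, ← eval_edgeTrace, h₄, eval_zero]

lemma eval_prod_squareEdges_ne_zero {x y : ℝ} (hx : x ∈ Ioo (-1 : ℝ) 1)
    (hy : y ∈ Ioo (-1 : ℝ) 1) :
    MvPolynomial.eval ![x, y]
      (∏ a ∈ squareEdges, (MvPolynomial.X a.1 - MvPolynomial.C a.2)) ≠ 0 := by
  rw [map_prod, Finset.prod_ne_zero_iff]
  intro a ha
  simp only [squareEdges, Finset.mem_insert, Finset.mem_singleton] at ha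
  rcases ha with rfl | rfl | rfl | rfl <;>
    simp only [map_sub, MvPolynomial.eval_X, MvPolynomial.eval_C, Matrix.cons_val_zero,
      Matrix.cons_val_one, Matrix.cons_val_fin_one] <;>
    intro h <;> linarith [hx.1, hx.2, hy.1, hy.2]

end Traces

end EnrichedSquare

open EnrichedSquare

theorem stmt_6 (k : ℕ)
    (I : Finset (ℝ × ℝ))
    (hI : ∀ r ∈ I, r.1 ∈ Set.Ioo (-1 : ℝ) 1 ∧ r.2 ∈ Set.Ioo (-1 : ℝ) 1)
    (hunisolv : ∀ q : MvPolynomial (Fin 2) ℝ,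
      (∀ d ∈ q.support, ((d 0 + d 1 : ℕ) : ℤ) ≤ 2 * (k : ℤ) - 3) →
      (∀ r ∈ I, MvPolynomial.eval ![r.1, r.2] q = 0) → q = 0)
    -- v ∈ ER_m(K̂) with m = 2k+1
    (v p : MvPolynomial (Fin 2) ℝ) (c₃ c₄ : ℝ)
    (hp : p.totalDegree ≤ 2 * k + 1)
    (hv : v = p + MvPolynomial.C c₃ *
        (MvPolynomial.X 0 ^ (2 * k + 1) * MvPolynomial.X 1 -
          MvPolynomial.X 0 * MvPolynomial.X 1 ^ (2 * k + 1)) +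
      MvPolynomial.C c₄ *
        (MvPolynomial.X 0 ^ (2 * k + 2) - MvPolynomial.X 1 ^ (2 * k + 2)))
    -- all moments of order ≤ 2k of v on each of the four edges vanish
    (hmom : ∀ j ≤ 2 * k,
      (∫ t in (-1 : ℝ)..1, MvPolynomial.eval ![1, t] v * t ^ j) = 0 ∧
      (∫ t in (-1 : ℝ)..1, MvPolynomial.eval ![-1, t] v * t ^ j) = 0 ∧
      (∫ t in (-1 : ℝ)..1, MvPolynomial.eval ![t, 1] v * t ^ j) = 0 ∧
      (∫ t in (-1 : ℝ)..1, MvPolynomial.eval ![t, -1] v * t ^ j) = 0)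
    -- v vanishes at every point of I
    (hIv : ∀ r ∈ I, MvPolynomial.eval ![r.1, r.2] v = 0) :
    v = 0 := by
  obtain ⟨t₁, t₂, t₃, t₄⟩ := edgeTraces_eq_zero hp hv
    (edgeTrace_mem_vanishingMoments fun j hj => (hmom j hj).1)
    (edgeTrace_mem_vanishingMoments fun j hj => (hmom j hj).2.1)
    (edgeTrace_rename_swap_mem_vanishingMoments fun j hj => (hmom j hj).2.2.1)
    (edgeTrace_rename_swap_mem_vanishingMoments fun j hj => (hmom j hj).2.2.2)
  have hvp := eq_of_edgeTrace_eq_zero hp hv t₁ t₂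
  obtain ⟨q, rfl⟩ := prod_squareEdges_dvd t₁ t₂ t₃ t₄
  suffices q = 0 by rw [this, mul_zero]
  refine hunisolv q (fun d hd => ?_) fun r hr => ?_
  · have hq : q ≠ 0 := by rintro rfl; simp at hd
    have hdeg := MvPolynomial.totalDegree_mul_of_isDomain (prod_X_sub_C_ne_zero squareEdges) hq
    rw [totalDegree_prod_X_sub_C, card_squareEdges, hvp] at hdeg
    have := add_le_totalDegree hd
    omega
  · have hv0 := hIv r hr
    rw [map_mul] at hv0
    exact (mul_eq_zero.mp hv0).resolve_left (eval_prod_squareEdges_ne_zero (hI r hr).1 (hI r hr).2)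
end

section
/- Let k ≥ 1 and let g_{-k}, …, g_{-1}, g_1, …, g_k be the zeros of the Legendre polynomial L_{2k}; they are 2k distinct nonzero points of (−1,1) and can be indexed so that g_{-i} = −g_i for all i. Then every real polynomial v in two variables whose restrictions to the four edges of K̂ = [−1,1]² — the univariate polynomials v(1,·), v(−1,·), v(·,1), v(·,−1) — have degree ≤ 2k (in particular, every v ∈ R_{2k}^{+}(K̂)) satisfies Σ_{i=−k, i≠0}^{k} [v(1,g_i) − v(−1,g_i) − v(g_i,1) + v(g_i,−1)] / (g_i (1−g_i²) ∏_{j=1, j≠|i|}^{k} (g_i² − g_j²)) = 0. -/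
/-!
Write `E(t) = v(1,t) - v(-1,t) - v(t,1) + v(t,-1)`, a polynomial of degree `≤ 2k`, and
`s_i = g_i²`. Pairing `i` with `-i` turns the sum into
`∑_{i=1}^k (E(g_i) - E(-g_i)) / (g_i (1 - s_i) ∏_{j≠i} (s_i - s_j))`.
The odd part of `E` is `t G(t²)` with `deg G < k`, and `G(1) = E(1) - E(-1) = 0` because the
corner values of `v` cancel. Hence `G = (X - 1) H` with `deg H < k - 1`, and the sum is
`-∑ H(s_i) / ∏_{j≠i} (s_i - s_j)`, the `(k-1)`-st divided difference of `H` at `k` distinct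
nodes, which vanishes.
-/

open Polynomial Finset

section DividedDifference

variable {K ι : Type*} [Field K] [DecidableEq ι] {s : Finset ι} {v : ι → K}

theorem sum_eval_div_prod_sub_eq_zero (hvs : Set.InjOn v s) {P : K[X]}
    (hP : P.degree < ↑(#s - 1)) :
    ∑ i ∈ s, P.eval (v i) / ∏ j ∈ s.erase i, (v i - v j) = 0 := by
  rw [← Lagrange.coeff_eq_sum hvs (hP.trans_le (by exact_mod_cast Nat.sub_le #s 1))]
  exact coeff_eq_zero_of_degree_lt hP

theorem sum_eval_div_sub_mul_prod_eq_zero (hvs : Set.InjOn v s) {a : K}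
    (ha : ∀ i ∈ s, v i ≠ a) {G : K[X]} (hG : G.degree < #s) (hGa : G.eval a = 0) :
    ∑ i ∈ s, G.eval (v i) / ((a - v i) * ∏ j ∈ s.erase i, (v i - v j)) = 0 := by
  set H := G /ₘ (X - C a)
  have hGH : (X - C a) * H = G := mul_divByMonic_eq_iff_isRoot.mpr hGa
  have hH : H.degree < ↑(#s - 1) := by
    rcases eq_or_ne H 0 with hH0 | hH0
    · simp [hH0]
    rw [← hGH, degree_mul, degree_X_sub_C, degree_eq_natDegree hH0] at hG
    rw [degree_eq_natDegree hH0]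
    norm_cast at hG ⊢
    omega
  calc ∑ i ∈ s, G.eval (v i) / ((a - v i) * ∏ j ∈ s.erase i, (v i - v j))
      = -∑ i ∈ s, H.eval (v i) / ∏ j ∈ s.erase i, (v i - v j) := by
        rw [← sum_neg_distrib]
        refine sum_congr rfl fun i hi => ?_
        have hai : a - v i ≠ 0 := sub_ne_zero.mpr (ha i hi).symm
        rw [← hGH, eval_mul, eval_sub, eval_X, eval_C, ← neg_sub, neg_mul, neg_div,
          mul_div_mul_left _ _ hai]
    _ = 0 := by rw [sum_eval_div_prod_sub_eq_zero hvs hH, neg_zero]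

end DividedDifference

theorem exists_eval_sub_eval_neg_eq_mul_eval_sq {R : Type*} [CommRing R] {F : R[X]} {n : ℕ}
    (hF : F.natDegree ≤ 2 * n) :
    ∃ G : R[X], G.degree < n ∧ ∀ x, F.eval x - F.eval (-x) = x * G.eval (x ^ 2) := by
  refine ⟨∑ m : Fin n, C (2 * F.coeff (2 * m + 1)) * X ^ (m : ℕ), degree_sum_fin_lt _,
    fun x => ?_⟩
  have hsum : ∀ N, ∑ i ∈ range (2 * N + 1), F.coeff i * (x ^ i - (-x) ^ i)
      = x * ∑ m ∈ range N, 2 * F.coeff (2 * m + 1) * (x ^ 2) ^ m := by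
    intro N
    induction N with
    | zero => simp
    | succ N ih =>
      rw [show 2 * (N + 1) + 1 = 2 * N + 1 + 1 + 1 by ring, sum_range_succ, sum_range_succ, ih,
        sum_range_succ, Odd.neg_pow ⟨N, rfl⟩, Even.neg_pow ⟨N + 1, by ring⟩]
      ring
  rw [eval_eq_sum_range' (Nat.lt_succ_of_le hF), eval_eq_sum_range' (Nat.lt_succ_of_le hF),
    ← sum_sub_distrib]
  simp only [eval_finsetSum, eval_mul, eval_C, eval_pow, eval_X]
  rw [Fin.sum_univ_eq_sum_range (fun m => 2 * F.coeff (2 * m + 1) * (x ^ 2) ^ m), ← hsum]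
  exact sum_congr rfl fun i _ => by ring

theorem sum_Icc_neg_erase_zero_eq_sum_pairs {M : Type*} [AddCommMonoid M] (k : ℕ)
    (φ : ℤ → M) :
    ∑ i ∈ (Icc (-(k : ℤ)) k).erase 0, φ i = ∑ i ∈ Icc (1 : ℤ) k, (φ i + φ (-i)) := by
  have hsplit : (Icc (-(k : ℤ)) k).erase 0 = Icc 1 (k : ℤ) ∪ Icc (-(k : ℤ)) (-1) := by
    ext i; simp only [mem_erase, mem_Icc, mem_union]; omega
  have hdisj : Disjoint (Icc 1 (k : ℤ)) (Icc (-(k : ℤ)) (-1)) :=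
    disjoint_left.mpr fun i hi hi' => by simp only [mem_Icc] at hi hi'; omega
  rw [hsplit, sum_union hdisj, sum_add_distrib]
  congr 1
  exact sum_nbij' (- ·) (- ·) (fun i hi => by simp only [mem_Icc] at hi ⊢; omega)
    (fun i hi => by simp only [mem_Icc] at hi ⊢; omega) (fun i _ => neg_neg i)
    (fun i _ => neg_neg i) (fun i _ => by rw [neg_neg])

theorem injOn_sq_Icc_one {R : Type*} [CommRing R] [NoZeroDivisors R] {k : ℕ} {g : ℤ → R}
    (hinj : Set.InjOn g ((Icc (-(k : ℤ)) k).erase 0))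
    (hsym : ∀ i ∈ (Icc (-(k : ℤ)) k).erase 0, g (-i) = -g i) :
    Set.InjOn (fun j => g j ^ 2) (Icc (1 : ℤ) k) := by
  intro i hi j hj hij
  simp only [coe_Icc, Set.mem_Icc] at hi hj
  have hiE : i ∈ (Icc (-(k : ℤ)) k).erase 0 := by simp only [mem_erase, mem_Icc]; omega
  have hjE : j ∈ (Icc (-(k : ℤ)) k).erase 0 := by simp only [mem_erase, mem_Icc]; omega
  have hnjE : -j ∈ (Icc (-(k : ℤ)) k).erase 0 := by simp only [mem_erase, mem_Icc]; omega
  rcases sq_eq_sq_iff_eq_or_eq_neg.mp hij with h | h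
  · exact hinj hiE hjE h
  · have := hinj hiE hnjE (h.trans (hsym j hjE).symm)
    omega

section EdgeDifference

variable {R : Type*} [CommRing R]

noncomputable def edgeDifference (v : MvPolynomial (Fin 2) R) : R[X] :=
  MvPolynomial.aeval ![1, X] v - MvPolynomial.aeval ![-1, X] v -
    MvPolynomial.aeval ![X, 1] v + MvPolynomial.aeval ![X, -1] v

theorem eval_aeval_vecCons₂ (a b : R[X]) (v : MvPolynomial (Fin 2) R) (t : R) :
    (MvPolynomial.aeval ![a, b] v).eval t = MvPolynomial.eval ![a.eval t, b.eval t] v := by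
  rw [← coe_aeval_eq_eval, ← AlgHom.comp_apply, MvPolynomial.comp_aeval]
  change MvPolynomial.eval _ v = _
  congr 2 with i
  fin_cases i <;> rfl

theorem eval_edgeDifference (v : MvPolynomial (Fin 2) R) (t : R) :
    (edgeDifference v).eval t = MvPolynomial.eval ![1, t] v - MvPolynomial.eval ![-1, t] v -
      MvPolynomial.eval ![t, 1] v + MvPolynomial.eval ![t, -1] v := by
  simp [edgeDifference, eval_aeval_vecCons₂]

theorem natDegree_edgeDifference_le {v : MvPolynomial (Fin 2) R} {n : ℕ}
    (h1 : (MvPolynomial.aeval ![(1 : R[X]), X] v).natDegree ≤ n)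
    (h2 : (MvPolynomial.aeval ![(-1 : R[X]), X] v).natDegree ≤ n)
    (h3 : (MvPolynomial.aeval ![(X : R[X]), 1] v).natDegree ≤ n)
    (h4 : (MvPolynomial.aeval ![(X : R[X]), -1] v).natDegree ≤ n) :
    (edgeDifference v).natDegree ≤ n := by
  have h12 := (natDegree_sub_le_of_le h1 h2).trans (max_self n).le
  exact natDegree_add_le_of_degree_le ((natDegree_sub_le_of_le h12 h3).trans (max_self n).le) h4

end EdgeDifference

theorem stmt_8_general (k : ℕ) (g : ℤ → ℝ)
    (hmem : ∀ i ∈ (Finset.Icc (-(k : ℤ)) (k : ℤ)).erase 0, g i ∈ Set.Ioo (-1 : ℝ) 1)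
    (hne : ∀ i ∈ (Finset.Icc (-(k : ℤ)) (k : ℤ)).erase 0, g i ≠ 0)
    (hinj : Set.InjOn g ((Finset.Icc (-(k : ℤ)) (k : ℤ)).erase 0))
    (hsym : ∀ i ∈ (Finset.Icc (-(k : ℤ)) (k : ℤ)).erase 0, g (-i) = -g i)
    (v : MvPolynomial (Fin 2) ℝ)
    (h1 : (MvPolynomial.aeval ![(1 : Polynomial ℝ), Polynomial.X] v).natDegree ≤ 2 * k)
    (h2 : (MvPolynomial.aeval ![(-1 : Polynomial ℝ), Polynomial.X] v).natDegree ≤ 2 * k)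
    (h3 : (MvPolynomial.aeval ![(Polynomial.X : Polynomial ℝ), 1] v).natDegree ≤ 2 * k)
    (h4 : (MvPolynomial.aeval ![(Polynomial.X : Polynomial ℝ), -1] v).natDegree ≤ 2 * k) :
    ∑ i ∈ (Finset.Icc (-(k : ℤ)) (k : ℤ)).erase 0,
      (MvPolynomial.eval ![1, g i] v - MvPolynomial.eval ![-1, g i] v -
        MvPolynomial.eval ![g i, 1] v + MvPolynomial.eval ![g i, -1] v) /
      (g i * (1 - (g i) ^ 2) *
        ∏ j ∈ (Finset.Icc (1 : ℤ) (k : ℤ)).erase |i|, ((g i) ^ 2 - (g j) ^ 2)) = 0 := by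
  set E := (Icc (-(k : ℤ)) k).erase 0
  set T := Icc (1 : ℤ) k
  have hTE : ∀ i ∈ T, 0 < i ∧ i ∈ E := by
    intro i hi
    simp only [T, E, mem_Icc, mem_erase] at hi ⊢
    omega
  obtain ⟨G, hGdeg, hG⟩ :=
    exists_eval_sub_eval_neg_eq_mul_eval_sq (natDegree_edgeDifference_le h1 h2 h3 h4)
  have hG1 : G.eval 1 = 0 := by
    have h := hG 1
    simp only [eval_edgeDifference, one_pow, one_mul] at h
    linear_combination -h
  have hsq_ne_one : ∀ i ∈ T, g i ^ 2 ≠ 1 := by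
    intro i hi
    obtain ⟨hl, hr⟩ := hmem i (hTE i hi).2
    nlinarith
  rw [sum_Icc_neg_erase_zero_eq_sum_pairs]
  calc _ = ∑ i ∈ T, G.eval (g i ^ 2) /
          ((1 - g i ^ 2) * ∏ j ∈ T.erase i, (g i ^ 2 - g j ^ 2)) := by
        refine sum_congr rfl fun i hi => ?_
        obtain ⟨hi0, hiE⟩ := hTE i hi
        rw [abs_neg, abs_of_pos hi0, hsym i hiE, neg_sq, ← eval_edgeDifference,
          ← eval_edgeDifference, neg_mul, neg_mul, div_neg, ← sub_eq_add_neg, ← sub_div, hG,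
          mul_assoc (g i), mul_div_mul_left _ _ (hne i hiE)]
    _ = 0 := sum_eval_div_sub_mul_prod_eq_zero (injOn_sq_Icc_one hinj hsym) hsq_ne_one
        (by simpa [T] using hGdeg) hG1

theorem stmt_8 (k : ℕ) (hk : 1 ≤ k) (g : ℤ → ℝ)
    (hzero : ∀ i ∈ (Finset.Icc (-(k : ℤ)) (k : ℤ)).erase 0,
      (legendreP (2 * k)).eval (g i) = 0)
    (hmem : ∀ i ∈ (Finset.Icc (-(k : ℤ)) (k : ℤ)).erase 0, g i ∈ Set.Ioo (-1 : ℝ) 1)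
    (hne : ∀ i ∈ (Finset.Icc (-(k : ℤ)) (k : ℤ)).erase 0, g i ≠ 0)
    (hinj : Set.InjOn g ((Finset.Icc (-(k : ℤ)) (k : ℤ)).erase 0))
    (hsym : ∀ i ∈ (Finset.Icc (-(k : ℤ)) (k : ℤ)).erase 0, g (-i) = -g i)
    (v : MvPolynomial (Fin 2) ℝ)
    (h1 : (MvPolynomial.aeval ![(1 : Polynomial ℝ), Polynomial.X] v).natDegree ≤ 2 * k)
    (h2 : (MvPolynomial.aeval ![(-1 : Polynomial ℝ), Polynomial.X] v).natDegree ≤ 2 * k)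
    (h3 : (MvPolynomial.aeval ![(Polynomial.X : Polynomial ℝ), 1] v).natDegree ≤ 2 * k)
    (h4 : (MvPolynomial.aeval ![(Polynomial.X : Polynomial ℝ), -1] v).natDegree ≤ 2 * k) :
    ∑ i ∈ (Finset.Icc (-(k : ℤ)) (k : ℤ)).erase 0,
      (MvPolynomial.eval ![1, g i] v - MvPolynomial.eval ![-1, g i] v -
        MvPolynomial.eval ![g i, 1] v + MvPolynomial.eval ![g i, -1] v) /
      (g i * (1 - (g i) ^ 2) *
        ∏ j ∈ (Finset.Icc (1 : ℤ) (k : ℤ)).erase |i|, ((g i) ^ 2 - (g j) ^ 2)) = 0 :=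
  stmt_8_general k g hmem hne hinj hsym v h1 h2 h3 h4
end

section
/- Let k ≥ 1, m = 2k, and let g_{-k}, …, g_{-1}, g_1, …, g_k be the zeros of the Legendre polynomial L_{2k}, which are 2k distinct nonzero points of (−1,1) indexed so that g_{-i} = −g_i. Let G⁺ := {(1,g_i), (−1,g_i), (g_i,1), (g_i,−1) : 1 ≤ |i| ≤ k} and let I⁺ be a finite subset of the open square (−1,1)² such that the only polynomial of total degree ≤ 2k−4 vanishing at every point of I⁺ is the zero polynomial. If v ∈ R_m^{+}(K̂) vanishes at every point of G⁺ ∪ I⁺ ∪ {(1,1)}, then v is the zero polynomial. -/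
open Polynomial Bivariate

section Roots

variable {R : Type*} [CommRing R] [IsDomain R]

theorem Polynomial.mul_X_sub_C_dvd {p : R[X]} {a b : R} (hab : a ≠ b) (ha : p.IsRoot a)
    (hb : p.IsRoot b) : (X - C a) * (X - C b) ∣ p := by
  obtain ⟨q, rfl⟩ := dvd_iff_isRoot.mpr ha
  have hq : q.IsRoot b := by simpa [IsRoot, sub_ne_zero.mpr hab.symm] using hb
  exact mul_dvd_mul_left _ (dvd_iff_isRoot.mpr hq)

theorem Polynomial.eq_zero_of_eval_eq_zero_of_injOn {ι : Type*} {s : Finset ι} {g : ι → R}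
    {a : R} {r : R[X]} (hg : Set.InjOn g s) (ha : ∀ i ∈ s, g i ≠ a) (hr : r.natDegree ≤ s.card)
    (hra : r.eval a = 0) (hrg : ∀ i ∈ s, r.eval (g i) = 0) : r = 0 := by
  classical
  refine eq_zero_of_natDegree_lt_card_of_eval_eq_zero' r (insert a (s.image g)) ?_ ?_
  · simpa [hra] using hrg
  · rw [Finset.card_insert_of_notMem (by simpa using ha), Finset.card_image_of_injOn hg]
    omega

theorem Polynomial.C_mul_X_sub_C_dvd_of_map_eq_zero {W : R[X][Y]} {a b : R} (hab : a ≠ b)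
    (ha : W.map (evalRingHom a) = 0) (hb : W.map (evalRingHom b) = 0) :
    C ((X - C a) * (X - C b)) ∣ W :=
  (C_dvd_iff_dvd_coeff _ _).mpr fun n =>
    mul_X_sub_C_dvd hab (by simpa using congr(coeff $ha n)) (by simpa using congr(coeff $hb n))

theorem Polynomial.Bivariate.exists_eq_mul_of_map_eq_zero_of_eval_eq_zero {P : R[X][Y]}
    {a₁ a₂ b₁ b₂ : R} (ha : a₁ ≠ a₂) (hb : b₁ ≠ b₂) (h₁ : P.map (evalRingHom a₁) = 0)
    (h₂ : P.map (evalRingHom a₂) = 0) (h₃ : P.eval (C b₁) = 0) (h₄ : P.eval (C b₂) = 0) :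
    ∃ U, P = C ((X - C a₁) * (X - C a₂)) * ((Y - C (C b₁)) * (Y - C (C b₂))) * U := by
  obtain ⟨W, rfl⟩ := mul_X_sub_C_dvd (C_injective.ne hb) h₃ h₄
  have hW : ∀ a, ((Y - C (C b₁)) * (Y - C (C b₂)) * W).map (evalRingHom a) = 0 →
      W.map (evalRingHom a) = 0 := fun a h => by
    simpa [Polynomial.map_mul, X_sub_C_ne_zero] using h
  obtain ⟨U, rfl⟩ := C_mul_X_sub_C_dvd_of_map_eq_zero ha (hW _ h₁) (hW _ h₂)
  exact ⟨U, by ring⟩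

end Roots

theorem MvPolynomial.natDegree_aeval_le_totalDegree {R σ : Type*} [CommRing R] {s : σ → R[X]}
    (hs : ∀ i, (s i).natDegree ≤ 1) (w : MvPolynomial σ R) :
    (aeval s w).natDegree ≤ w.totalDegree := by
  conv_lhs => rw [w.as_sum, map_sum]
  refine natDegree_sum_le_of_forall_le _ _ fun d hd => ?_
  rw [aeval_monomial, ← Polynomial.C_eq_algebraMap]
  refine (natDegree_C_mul_le _ _).trans ((natDegree_prod_le _ _).trans ?_)
  refine (Finset.sum_le_sum fun i _ => natDegree_pow_le_of_le (d i) (hs i)).trans ?_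
  simp only [mul_one]
  exact le_totalDegree hd

theorem MvPolynomial.coeff_add_mul_of_totalDegree_lt {R σ : Type*} [CommRing R]
    {f u : MvPolynomial σ R} {e d : σ →₀ ℕ} (hf : (f - monomial e 1).totalDegree < e.degree)
    (hu : u.totalDegree ≤ d.degree) : coeff (e + d) (f * u) = coeff d u := by
  have hlow : coeff (e + d) ((f - monomial e 1) * u) = 0 :=
    coeff_eq_zero_of_totalDegree_lt <|
      (totalDegree_mul _ _).trans_lt (by rw [← Finsupp.degree_apply, map_add]; omega)
  rw [← sub_add_cancel f (monomial e 1), add_mul, coeff_add, hlow, coeff_monomial_mul, one_mul,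
    zero_add]

section Restriction

variable {R : Type*} [CommRing R]

/-- `restrictFst a v` is `t ↦ v(a, t)` and `restrictSnd b v` is `t ↦ v(t, b)`. -/
noncomputable def restrictFst (a : R) : MvPolynomial (Fin 2) R →ₐ[R] R[X] :=
  MvPolynomial.aeval ![C a, X]

noncomputable def restrictSnd (b : R) : MvPolynomial (Fin 2) R →ₐ[R] R[X] :=
  MvPolynomial.aeval ![X, C b]

theorem eval_restrictFst (a t : R) (v : MvPolynomial (Fin 2) R) :
    (restrictFst a v).eval t = MvPolynomial.eval ![a, t] v := by
  induction v using MvPolynomial.induction_on with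
  | C r => simp
  | add p q hp hq => simp [hp, hq]
  | mul_X p i hp => rw [map_mul, eval_mul, hp]; fin_cases i <;> simp [restrictFst]

theorem eval_restrictSnd (b t : R) (v : MvPolynomial (Fin 2) R) :
    (restrictSnd b v).eval t = MvPolynomial.eval ![t, b] v := by
  induction v using MvPolynomial.induction_on with
  | C r => simp
  | add p q hp hq => simp [hp, hq]
  | mul_X p i hp => rw [map_mul, eval_mul, hp]; fin_cases i <;> simp [restrictSnd]

theorem restrictFst_eq_map (a : R) (v : MvPolynomial (Fin 2) R) :
    restrictFst a v = ((equivMvPolynomial R).symm v).map (evalRingHom a) := by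
  induction v using MvPolynomial.induction_on with
  | C r => simp [restrictFst]
  | add p q hp hq => simp [hp, hq]
  | mul_X p i hp => rw [map_mul, hp]; fin_cases i <;> simp [restrictFst]

theorem restrictSnd_eq_eval (b : R) (v : MvPolynomial (Fin 2) R) :
    restrictSnd b v = ((equivMvPolynomial R).symm v).eval (C b) := by
  induction v using MvPolynomial.induction_on with
  | C r => simp [restrictSnd]
  | add p q hp hq => simp [hp, hq]
  | mul_X p i hp => rw [map_mul, hp]; fin_cases i <;> simp [restrictSnd]

theorem exists_eq_mul_of_restrict_eq_zero [IsDomain R] {v : MvPolynomial (Fin 2) R}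
    {a₁ a₂ b₁ b₂ : R} (ha : a₁ ≠ a₂) (hb : b₁ ≠ b₂) (h₁ : restrictFst a₁ v = 0)
    (h₂ : restrictFst a₂ v = 0) (h₃ : restrictSnd b₁ v = 0) (h₄ : restrictSnd b₂ v = 0) :
    ∃ u, v = (MvPolynomial.X 0 - MvPolynomial.C a₁) * (MvPolynomial.X 0 - MvPolynomial.C a₂) *
      ((MvPolynomial.X 1 - MvPolynomial.C b₁) * (MvPolynomial.X 1 - MvPolynomial.C b₂)) * u := by
  rw [restrictFst_eq_map] at h₁ h₂
  rw [restrictSnd_eq_eval] at h₃ h₄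
  obtain ⟨U, hU⟩ := exists_eq_mul_of_map_eq_zero_of_eval_eq_zero ha hb h₁ h₂ h₃ h₄
  refine ⟨equivMvPolynomial R U, ?_⟩
  rw [← (equivMvPolynomial R).apply_symm_apply v, hU]
  simp

end Restriction

section RPlus

variable {R : Type*} [CommRing R]

variable (R) in
noncomputable def rPlus (m : ℕ) : Submodule R (MvPolynomial (Fin 2) R) :=
  MvPolynomial.restrictTotalDegree (Fin 2) R m ⊔
    Submodule.span R {MvPolynomial.X 0 ^ m * MvPolynomial.X 1,
      MvPolynomial.X 0 * MvPolynomial.X 1 ^ m}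

theorem add_C_mul_mem_rPlus {m : ℕ} {p : MvPolynomial (Fin 2) R} (hp : p.totalDegree ≤ m)
    (c₁ c₂ : R) :
    p + MvPolynomial.C c₁ * (MvPolynomial.X 0 ^ m * MvPolynomial.X 1) +
      MvPolynomial.C c₂ * (MvPolynomial.X 0 * MvPolynomial.X 1 ^ m) ∈ rPlus R m := by
  rw [MvPolynomial.C_mul', MvPolynomial.C_mul', add_assoc]
  exact Submodule.add_mem_sup ((MvPolynomial.mem_restrictTotalDegree _ _ _).mpr hp)
    (add_mem (Submodule.smul_mem _ _ (Submodule.subset_span (by simp)))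
      (Submodule.smul_mem _ _ (Submodule.subset_span (by simp))))

theorem natDegree_aeval_le_of_mem_rPlus {m : ℕ} {s₀ s₁ : R[X]} (hs₀ : s₀.natDegree ≤ 1)
    (hs₁ : s₁.natDegree ≤ 1) (h₀ : (s₀ ^ m * s₁).natDegree ≤ m) (h₁ : (s₀ * s₁ ^ m).natDegree ≤ m)
    {v : MvPolynomial (Fin 2) R} (hv : v ∈ rPlus R m) :
    (MvPolynomial.aeval ![s₀, s₁] v).natDegree ≤ m := by
  suffices rPlus R m ≤ (degreeLE R m).comap (MvPolynomial.aeval ![s₀, s₁]).toLinearMap from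
    natDegree_le_iff_degree_le.mpr (mem_degreeLE.mp (this hv))
  refine sup_le (fun p hp => ?_) (Submodule.span_le.mpr ?_)
  · exact mem_degreeLE.mpr <| degree_le_of_natDegree_le <|
      (MvPolynomial.natDegree_aeval_le_totalDegree (Fin.forall_fin_two.mpr ⟨hs₀, hs₁⟩) p).trans
        ((MvPolynomial.mem_restrictTotalDegree _ _ _).mp hp)
  · rintro _ (rfl | rfl) <;>
      simpa only [SetLike.mem_coe, Submodule.mem_comap, mem_degreeLE, AlgHom.toLinearMap_apply,
        map_mul, map_pow, MvPolynomial.aeval_X, Matrix.cons_val_zero, Matrix.cons_val_one,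
        Matrix.cons_val_fin_one] using degree_le_of_natDegree_le ‹_›

theorem natDegree_restrictFst_le_of_mem_rPlus {m : ℕ} (hm : 1 ≤ m) {v : MvPolynomial (Fin 2) R}
    (hv : v ∈ rPlus R m) (a : R) : (restrictFst a v).natDegree ≤ m :=
  natDegree_aeval_le_of_mem_rPlus (by simp) natDegree_X_le (by compute_degree!)
    (by compute_degree!) hv

theorem natDegree_restrictSnd_le_of_mem_rPlus {m : ℕ} (hm : 1 ≤ m) {v : MvPolynomial (Fin 2) R}
    (hv : v ∈ rPlus R m) (b : R) : (restrictSnd b v).natDegree ≤ m :=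
  natDegree_aeval_le_of_mem_rPlus natDegree_X_le (by simp) (by compute_degree!)
    (by compute_degree!) hv

theorem coeff_eq_zero_of_mem_rPlus {m : ℕ} {v : MvPolynomial (Fin 2) R} (hv : v ∈ rPlus R m)
    {d : Fin 2 →₀ ℕ} (hd : m < d.degree) (h₀ : d 0 ≠ 1) (h₁ : d 1 ≠ 1) :
    MvPolynomial.coeff d v = 0 := by
  suffices rPlus R m ≤ LinearMap.ker (MvPolynomial.lcoeff R d) from this hv
  refine sup_le (fun p hp => ?_) (Submodule.span_le.mpr ?_)
  · exact MvPolynomial.coeff_eq_zero_of_totalDegree_lt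
      (((MvPolynomial.mem_restrictTotalDegree _ _ _).mp hp).trans_lt hd)
  · rintro _ (rfl | rfl) <;>
      simp only [SetLike.mem_coe, LinearMap.mem_ker, MvPolynomial.lcoeff_apply,
        MvPolynomial.coeff_mul_X', MvPolynomial.coeff_X_mul', MvPolynomial.coeff_X_pow]
    · split_ifs with h h' <;> try rfl
      have := congr($h' 1)
      simp only [Finsupp.mem_support_iff, Finsupp.coe_tsub, Pi.sub_apply, Finsupp.single_eq_same,
        Finsupp.single_eq_of_ne one_ne_zero] at h this
      omega
    · split_ifs with h h' <;> try rfl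
      have := congr($h' 0)
      simp only [Finsupp.mem_support_iff, Finsupp.coe_tsub, Pi.sub_apply, Finsupp.single_eq_same,
        Finsupp.single_eq_of_ne zero_ne_one] at h this
      omega

open MvPolynomial in
theorem totalDegree_add_four_le_of_mul_mem_rPlus [Nontrivial R] {m : ℕ}
    {u : MvPolynomial (Fin 2) R} (hu : u ≠ 0)
    (h : (X 0 ^ 2 - 1) * (X 1 ^ 2 - 1) * u ∈ rPlus R m) : u.totalDegree + 4 ≤ m := by
  obtain ⟨d, hd, hdeg⟩ : ∃ d ∈ u.support, u.totalDegree = d.degree :=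
    Finset.exists_mem_eq_sup _ (support_nonempty.mpr hu) _
  set e : Fin 2 →₀ ℕ := Finsupp.single 0 2 + Finsupp.single 1 2
  have he : e.degree = 4 := by simp [e]
  have hlead : (X 0 ^ 2 - 1) * (X 1 ^ 2 - 1) - monomial e (1 : R) = 1 - X 0 ^ 2 - X 1 ^ 2 := by
    rw [← one_mul (1 : R), ← monomial_mul, ← MvPolynomial.X_pow_eq_monomial,
      ← MvPolynomial.X_pow_eq_monomial]
    ring
  have hlow : (1 - X 0 ^ 2 - X 1 ^ 2 : MvPolynomial (Fin 2) R).totalDegree < e.degree := by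
    rw [he]
    refine (totalDegree_sub _ _).trans_lt
      (max_lt ((totalDegree_sub _ _).trans_lt (max_lt ?_ ?_)) ?_) <;> simp [totalDegree_X_pow]
  have hcoeff := coeff_add_mul_of_totalDegree_lt (hlead ▸ hlow) hdeg.le
  have hed : (e + d).degree = 4 + d.degree := by rw [map_add, he]
  have he₀ : (e + d) 0 = 2 + d 0 := by simp [e]
  have he₁ : (e + d) 1 = 2 + d 1 := by simp [e]
  by_contra! hlt
  exact mem_support_iff.mp hd
    (hcoeff ▸ coeff_eq_zero_of_mem_rPlus h (by omega) (by omega) (by omega))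

end RPlus

theorem stmt_9_general (k : ℕ) (hk : 1 ≤ k) (g : ℤ → ℝ)
    (hmem : ∀ i ∈ (Finset.Icc (-(k : ℤ)) (k : ℤ)).erase 0, g i ∈ Set.Ioo (-1 : ℝ) 1)
    (hinj : Set.InjOn g ((Finset.Icc (-(k : ℤ)) (k : ℤ)).erase 0))
    (I : Finset (ℝ × ℝ))
    (hI : ∀ r ∈ I, r.1 ∈ Set.Ioo (-1 : ℝ) 1 ∧ r.2 ∈ Set.Ioo (-1 : ℝ) 1)
    (hunisolv : ∀ q : MvPolynomial (Fin 2) ℝ,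
      (∀ d ∈ q.support, ((d 0 + d 1 : ℕ) : ℤ) ≤ 2 * (k : ℤ) - 4) →
      (∀ r ∈ I, MvPolynomial.eval ![r.1, r.2] q = 0) → q = 0)
    -- v ∈ R_m⁺(K̂) with m = 2k
    (v p : MvPolynomial (Fin 2) ℝ) (c₁ c₂ : ℝ)
    (hp : p.totalDegree ≤ 2 * k)
    (hv : v = p + MvPolynomial.C c₁ * (MvPolynomial.X 0 ^ (2 * k) * MvPolynomial.X 1) +
      MvPolynomial.C c₂ * (MvPolynomial.X 0 * MvPolynomial.X 1 ^ (2 * k)))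
    -- v vanishes at every point of G⁺
    (hG : ∀ i ∈ (Finset.Icc (-(k : ℤ)) (k : ℤ)).erase 0,
      MvPolynomial.eval ![1, g i] v = 0 ∧ MvPolynomial.eval ![-1, g i] v = 0 ∧
      MvPolynomial.eval ![g i, 1] v = 0 ∧ MvPolynomial.eval ![g i, -1] v = 0)
    -- v vanishes at every point of I⁺ and at (1,1)
    (hIv : ∀ r ∈ I, MvPolynomial.eval ![r.1, r.2] v = 0)
    (hcorner : MvPolynomial.eval ![1, 1] v = 0) :
    v = 0 := by
  have hvR : v ∈ rPlus ℝ (2 * k) := hv ▸ add_C_mul_mem_rPlus hp c₁ c₂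
  have hm : 1 ≤ 2 * k := by omega
  have hcard : ((Finset.Icc (-(k : ℤ)) k).erase 0).card = 2 * k := by
    rw [Finset.card_erase_of_mem (by simp), Int.card_Icc]; omega
  have hedge : ∀ r : ℝ[X], r.natDegree ≤ 2 * k → r.eval 1 = 0 →
      (∀ i ∈ (Finset.Icc (-(k : ℤ)) k).erase 0, r.eval (g i) = 0) → r = 0 := fun r hr =>
    eq_zero_of_eval_eq_zero_of_injOn hinj (fun i hi => (hmem i hi).2.ne) (hcard ▸ hr)
  have h₁ : restrictFst 1 v = 0 := hedge _ (natDegree_restrictFst_le_of_mem_rPlus hm hvR 1)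
    (by rwa [eval_restrictFst]) fun i hi => by rw [eval_restrictFst]; exact (hG i hi).1
  have h₃ : restrictSnd 1 v = 0 := hedge _ (natDegree_restrictSnd_le_of_mem_rPlus hm hvR 1)
    (by rwa [eval_restrictSnd]) fun i hi => by rw [eval_restrictSnd]; exact (hG i hi).2.2.1
  have h₂ : restrictFst (-1) v = 0 := hedge _ (natDegree_restrictFst_le_of_mem_rPlus hm hvR (-1))
    (by rw [eval_restrictFst, ← eval_restrictSnd, h₃, eval_zero])
    fun i hi => by rw [eval_restrictFst]; exact (hG i hi).2.1
  have h₄ : restrictSnd (-1) v = 0 := hedge _ (natDegree_restrictSnd_le_of_mem_rPlus hm hvR (-1))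
    (by rw [eval_restrictSnd, ← eval_restrictFst, h₁, eval_zero])
    fun i hi => by rw [eval_restrictSnd]; exact (hG i hi).2.2.2
  obtain ⟨u, hu⟩ := exists_eq_mul_of_restrict_eq_zero (by norm_num) (by norm_num) h₁ h₂ h₃ h₄
  replace hu : v = (MvPolynomial.X 0 ^ 2 - 1) * (MvPolynomial.X 1 ^ 2 - 1) * u := by
    rw [hu]; simp only [map_one, map_neg]; ring
  suffices u = 0 by rw [hu, this, mul_zero]
  by_contra hu0
  have hdeg := totalDegree_add_four_le_of_mul_mem_rPlus hu0 (hu ▸ hvR)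
  refine hu0 (hunisolv u (fun d hd => ?_) fun r hr => ?_)
  · have hd' : d.degree ≤ u.totalDegree := MvPolynomial.le_totalDegree hd
    rw [Finsupp.degree_eq_sum, Fin.sum_univ_two] at hd'
    omega
  · obtain ⟨⟨hx₁, hx₂⟩, hy₁, hy₂⟩ := hI r hr
    have hx : r.1 ^ 2 - 1 ≠ 0 := by nlinarith
    have hy : r.2 ^ 2 - 1 ≠ 0 := by nlinarith
    simpa [hu, hx, hy] using hIv r hr

theorem stmt_9 (k : ℕ) (hk : 1 ≤ k) (g : ℤ → ℝ)
    (hzero : ∀ i ∈ (Finset.Icc (-(k : ℤ)) (k : ℤ)).erase 0,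
      (legendreP (2 * k)).eval (g i) = 0)
    (hmem : ∀ i ∈ (Finset.Icc (-(k : ℤ)) (k : ℤ)).erase 0, g i ∈ Set.Ioo (-1 : ℝ) 1)
    (hne : ∀ i ∈ (Finset.Icc (-(k : ℤ)) (k : ℤ)).erase 0, g i ≠ 0)
    (hinj : Set.InjOn g ((Finset.Icc (-(k : ℤ)) (k : ℤ)).erase 0))
    (hsym : ∀ i ∈ (Finset.Icc (-(k : ℤ)) (k : ℤ)).erase 0, g (-i) = -g i)
    (I : Finset (ℝ × ℝ))
    (hI : ∀ r ∈ I, r.1 ∈ Set.Ioo (-1 : ℝ) 1 ∧ r.2 ∈ Set.Ioo (-1 : ℝ) 1)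
    (hunisolv : ∀ q : MvPolynomial (Fin 2) ℝ,
      (∀ d ∈ q.support, ((d 0 + d 1 : ℕ) : ℤ) ≤ 2 * (k : ℤ) - 4) →
      (∀ r ∈ I, MvPolynomial.eval ![r.1, r.2] q = 0) → q = 0)
    -- v ∈ R_m⁺(K̂) with m = 2k
    (v p : MvPolynomial (Fin 2) ℝ) (c₁ c₂ : ℝ)
    (hp : p.totalDegree ≤ 2 * k)
    (hv : v = p + MvPolynomial.C c₁ * (MvPolynomial.X 0 ^ (2 * k) * MvPolynomial.X 1) +
      MvPolynomial.C c₂ * (MvPolynomial.X 0 * MvPolynomial.X 1 ^ (2 * k)))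
    -- v vanishes at every point of G⁺
    (hG : ∀ i ∈ (Finset.Icc (-(k : ℤ)) (k : ℤ)).erase 0,
      MvPolynomial.eval ![1, g i] v = 0 ∧ MvPolynomial.eval ![-1, g i] v = 0 ∧
      MvPolynomial.eval ![g i, 1] v = 0 ∧ MvPolynomial.eval ![g i, -1] v = 0)
    -- v vanishes at every point of I⁺ and at (1,1)
    (hIv : ∀ r ∈ I, MvPolynomial.eval ![r.1, r.2] v = 0)
    (hcorner : MvPolynomial.eval ![1, 1] v = 0) :
    v = 0 :=
  stmt_9_general k hk g hmem hinj I hI hunisolv v p c₁ c₂ hp hv hG hIv hcorner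
end
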